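/- arXiv:math/0509375 — 6 statements merged into one kernel-verified Lean document; each statement's English description precedes it below -/
import Mathlib

section
/- Mean ergodic theorem for Følner nets: Let G be a locally compact Hausdorff group with right Haar measure μ, and K ⊆ G a Borel measurable subsemigroup. Let U : K → B(H) satisfy ‖U_g‖ ≤ 1, U_g U_h = U_{gh} for all g, h ∈ K, and suppose g ↦ ⟨U_g x, y⟩ is Borel measurable on K for all x, y ∈ H. Let P be the orthogonal projection of H onto V = {x ∈ H : U_g x = x for all g ∈ K}. Then for any net {Λ_α} of Borel subsets of K with 0 < μ(Λ_α) < ∞ (eventually) and lim_α μ(Λ_α Δ (Λ_α g))/μ(Λ_α) = 0 for every g ∈ K, one has lim_α (1/μ(Λ_α)) ∫_{Λ_α} U_g x dg = P x for every x ∈ H, where the integral is the weak (Pettis) integral. -/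
open MeasureTheory Filter
open scoped symmDiff

local notation "⟪" x ", " y "⟫" => @inner ℂ _ _ x y

/-- **Mean ergodic theorem.** Over a locally compact Hausdorff group `G`
with right Haar measure `μ` and a Borel subsemigroup `K`, for a weakly measurable
semigroup of contractions `U` on a complex Hilbert space and any space-filling
(Følner) net `Λ` in `K`, the averages of the weak integrals of `g ↦ U g x` over
`Λ α` converge to `P x`, where `P` is the orthogonal projection onto the common
fixed space. -/
theorem mean_ergodic_theorem
    {G : Type*} [Group G] [TopologicalSpace G] [IsTopologicalGroup G]
    [LocallyCompactSpace G] [T2Space G] [MeasurableSpace G] [BorelSpace G]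
    (μ : Measure G) [μ.IsMulRightInvariant] [IsFiniteMeasureOnCompacts μ]
    [μ.IsOpenPosMeasure]
    (K : Set G) (hKmeas : MeasurableSet K)
    (hKmul : ∀ g ∈ K, ∀ h ∈ K, g * h ∈ K)
    {H : Type*} [NormedAddCommGroup H] [InnerProductSpace ℂ H] [CompleteSpace H]
    (U : G → H →L[ℂ] H)
    (hUcontr : ∀ g ∈ K, ‖U g‖ ≤ 1)
    (hUmul : ∀ g ∈ K, ∀ h ∈ K, ∀ x : H, U g (U h x) = U (g * h) x)
    (hUmeas : ∀ x y : H, Measurable fun g : K => ⟪U (g : G) x, y⟫)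
    -- `P` is the orthogonal projection onto the common fixed space `V`:
    (P : H →L[ℂ] H)
    (hPfix : ∀ x : H, ∀ g ∈ K, U g (P x) = P x)
    (hPorth : ∀ x v : H, (∀ g ∈ K, U g v = v) → ⟪x - P x, v⟫ = 0)
    -- a space-filling net `Λ` in `K`:
    {ι : Type*} [Nonempty ι] [Preorder ι] [IsDirected ι (· ≤ ·)]
    (Λ : ι → Set G) (hΛK : ∀ α, Λ α ⊆ K) (hΛmeas : ∀ α, MeasurableSet (Λ α))
    (hΛfin : ∀ α, μ (Λ α) < ⊤)
    (hΛpos : ∀ᶠ α in atTop, 0 < μ (Λ α))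
    (hFolner : ∀ g ∈ K,
      Tendsto (fun α => (μ ((Λ α) ∆ ((fun u => u * g) '' (Λ α)))).toReal / (μ (Λ α)).toReal)
        atTop (nhds 0)) :
    ∀ x : H, ∀ I : ι → H,
      (∀ (α : ι) (y : H), ⟪I α, y⟫ = ∫ g in Λ α, ⟪U g x, y⟫ ∂μ) →
      Tendsto (fun α => (μ (Λ α)).toReal⁻¹ • I α) atTop (nhds (P x)) := by
  intro x I hI
  -- norm bounds
  have hUz : ∀ (z : H) (g : G), g ∈ K → ‖U g z‖ ≤ ‖z‖ := by
    intro z g hg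
    calc ‖U g z‖ ≤ ‖U g‖ * ‖z‖ := (U g).le_opNorm z
    _ ≤ 1 * ‖z‖ := mul_le_mul_of_nonneg_right (hUcontr g hg) (norm_nonneg z)
    _ = ‖z‖ := one_mul _
  have hbound : ∀ (z y : H) (g : G), g ∈ K → ‖⟪U g z, y⟫‖ ≤ ‖z‖ * ‖y‖ := by
    intro z y g hg
    calc ‖⟪U g z, y⟫‖ ≤ ‖U g z‖ * ‖y‖ := norm_inner_le_norm _ _
    _ ≤ ‖z‖ * ‖y‖ := mul_le_mul_of_nonneg_right (hUz z g hg) (norm_nonneg y)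
  -- measurability on K
  have hmeasK : ∀ z y : H, AEStronglyMeasurable (fun g : G => ⟪U g z, y⟫) (μ.restrict K) := by
    intro z y
    have hext : Measurable (Function.extend (Subtype.val : K → G)
        (fun g : K => ⟪U (g : G) z, y⟫) (fun _ => 0)) :=
      (MeasurableEmbedding.subtype_coe hKmeas).measurable_extend (hUmeas z y) measurable_const
    refine hext.aestronglyMeasurable.congr ?_
    filter_upwards [ae_restrict_mem hKmeas] with g hg
    exact Subtype.val_injective.extend_apply _ _ ⟨g, hg⟩
  have hmeasS : ∀ (z y : H) {s : Set G}, s ⊆ K →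
      AEStronglyMeasurable (fun g : G => ⟪U g z, y⟫) (μ.restrict s) := by
    intro z y s hsK
    exact (hmeasK z y).mono_measure (Measure.restrict_mono hsK le_rfl)
  -- integrability on finite-measure subsets of K
  have hint : ∀ (z y : H) {s : Set G}, MeasurableSet s → s ⊆ K → μ s < ⊤ →
      IntegrableOn (fun g : G => ⟪U g z, y⟫) s μ := by
    intro z y s hs hsK hfin
    refine Integrable.mono' ((integrableOn_const_iff (C := ‖z‖ * ‖y‖)).2 (Or.inr hfin)) (hmeasS z y hsK) ?_
    filter_upwards [ae_restrict_mem hs] with g hg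
    exact hbound z y g (hsK hg)
  have hnormint : ∀ (z y : H) {s : Set G}, s ⊆ K → μ s < ⊤ →
      ‖∫ g in s, ⟪U g z, y⟫ ∂μ‖ ≤ (‖z‖ * ‖y‖) * (μ s).toReal := by
    intro z y s hsK hfin
    exact norm_setIntegral_le_of_norm_le_const hfin
      (fun g hg => hbound z y g (hsK hg))
  -- key identity
  have hkey : ∀ (α : ι) (y : H), ⟪I α, y⟫ - ((μ (Λ α)).toReal : ℂ) * ⟪P x, y⟫
      = ∫ g in Λ α, ⟪U g (x - P x), y⟫ ∂μ := by
    intro α y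
    have h1 : Set.EqOn (fun g : G => ⟪U g x, y⟫)
        (fun g : G => ⟪P x, y⟫ + ⟪U g (x - P x), y⟫) (Λ α) := by
      intro g hg
      have h2 : U g x = P x + U g (x - P x) := by
        rw [map_sub, hPfix x g (hΛK α hg)]; abel
      simp only [h2, inner_add_left]
    rw [hI α y, setIntegral_congr_fun (hΛmeas α) h1,
      integral_add ((integrableOn_const_iff (C := ⟪P x, y⟫)).2 (Or.inr (hΛfin α)))
        (hint (x - P x) y (hΛmeas α) (hΛK α) (hΛfin α)),
      setIntegral_const, measureReal_def, Complex.real_smul]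
    ring
  -- the "Good" predicate: averages of w pair weakly small, uniformly in y
  let Good : H → Prop := fun w => ∀ ε > (0:ℝ), ∀ᶠ α in atTop, ∀ y : H,
    ‖∫ g in Λ α, ⟪U g w, y⟫ ∂μ‖ ≤ ε * (μ (Λ α)).toReal * ‖y‖
  have good_zero : Good 0 := by
    intro ε hε
    refine Eventually.of_forall fun α => fun y => ?_
    simp only [map_zero, inner_zero_left, integral_zero, norm_zero]
    positivity
  have good_add : ∀ w₁ w₂, Good w₁ → Good w₂ → Good (w₁ + w₂) := by
    intro w₁ w₂ h₁ h₂ ε hε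
    filter_upwards [h₁ (ε/2) (by linarith), h₂ (ε/2) (by linarith)] with α hα₁ hα₂ y
    have heq : Set.EqOn (fun g : G => ⟪U g (w₁ + w₂), y⟫)
        (fun g : G => ⟪U g w₁, y⟫ + ⟪U g w₂, y⟫) (Λ α) := by
      intro g _; simp [map_add, inner_add_left]
    rw [setIntegral_congr_fun (hΛmeas α) heq,
      integral_add (hint w₁ y (hΛmeas α) (hΛK α) (hΛfin α))
        (hint w₂ y (hΛmeas α) (hΛK α) (hΛfin α))]
    calc ‖(∫ g in Λ α, ⟪U g w₁, y⟫ ∂μ) + ∫ g in Λ α, ⟪U g w₂, y⟫ ∂μ‖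
        ≤ ‖∫ g in Λ α, ⟪U g w₁, y⟫ ∂μ‖ + ‖∫ g in Λ α, ⟪U g w₂, y⟫ ∂μ‖ := norm_add_le _ _
    _ ≤ ε/2 * (μ (Λ α)).toReal * ‖y‖ + ε/2 * (μ (Λ α)).toReal * ‖y‖ :=
        add_le_add (hα₁ y) (hα₂ y)
    _ = ε * (μ (Λ α)).toReal * ‖y‖ := by ring
  have good_smul : ∀ (c : ℂ) (w : H), Good w → Good (c • w) := by
    intro c w hw ε hε
    have hc1 : (0:ℝ) < ‖c‖ + 1 := by positivity
    filter_upwards [hw (ε/(‖c‖+1)) (by positivity)] with α hα y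
    have heq : Set.EqOn (fun g : G => ⟪U g (c • w), y⟫)
        (fun g : G => (starRingEnd ℂ) c * ⟪U g w, y⟫) (Λ α) := by
      intro g _; simp [_root_.map_smul, inner_smul_left, mul_comm]
    rw [setIntegral_congr_fun (hΛmeas α) heq, integral_const_mul, norm_mul,
      RCLike.norm_conj]
    have h1 := hα y
    have hμ0 : (0:ℝ) ≤ (μ (Λ α)).toReal := ENNReal.toReal_nonneg
    have hy0 : (0:ℝ) ≤ ‖y‖ := norm_nonneg y
    calc ‖c‖ * ‖∫ g in Λ α, ⟪U g w, y⟫ ∂μ‖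
        ≤ ‖c‖ * (ε/(‖c‖+1) * (μ (Λ α)).toReal * ‖y‖) :=
        mul_le_mul_of_nonneg_left h1 (norm_nonneg c)
    _ ≤ ε * (μ (Λ α)).toReal * ‖y‖ := by
        rw [div_mul_eq_mul_div, div_mul_eq_mul_div, mul_div_assoc', div_le_iff₀ hc1]
        nlinarith [norm_nonneg c, mul_nonneg hμ0 hy0, mul_nonneg (mul_nonneg hμ0 hy0) hε.le]
  -- generators are Good (the Følner estimate)
  have good_gen : ∀ (z : H), ∀ h ∈ K, Good (z - U h z) := by
    intro z h hh ε hε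
    have hCz : (0:ℝ) < ‖z‖ + 1 := by positivity
    have hδ : (0:ℝ) < ε / (‖z‖ + 1) := by positivity
    filter_upwards [(hFolner h hh).eventually (gt_mem_nhds hδ), hΛpos] with α hratio hpos y
    set A := Λ α with hA
    set B := (fun u => u * h) '' A with hB
    have hmulemb : MeasurableEmbedding (fun u : G => u * h) :=
      (Homeomorph.mulRight h).measurableEmbedding
    have hmp : MeasurePreserving (fun u : G => u * h) μ μ := measurePreserving_mul_right μ h
    have hBmeas : MeasurableSet B := hmulemb.measurableSet_image.2 (hΛmeas α)
    have hBK : B ⊆ K := by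
      rintro _ ⟨g, hg, rfl⟩
      exact hKmul g (hΛK α hg) h hh
    have hAK := hΛK α
    have hAfin := hΛfin α
    have hμB : μ B = μ A := by
      rw [hB, show (fun u : G => u * h) = (· * h) from rfl, Set.image_mul_right]
      exact measure_preimage_mul_right μ h⁻¹ A
    have hBfin : μ B < ⊤ := by rw [hμB]; exact hAfin
    have heq : Set.EqOn (fun g : G => ⟪U g (z - U h z), y⟫)
        (fun g : G => ⟪U g z, y⟫ - ⟪U (g * h) z, y⟫) A := by
      intro g hg
      simp only [map_sub, inner_sub_left, hUmul g (hAK hg) h hh z]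
    have hchg : (∫ g in A, ⟪U (g * h) z, y⟫ ∂μ) = ∫ g in B, ⟪U g z, y⟫ ∂μ :=
      (hmp.setIntegral_image_emb hmulemb (fun g => ⟪U g z, y⟫) A).symm
    have hintA : IntegrableOn (fun g : G => ⟪U g z, y⟫) A μ := hint z y (hΛmeas α) hAK hAfin
    have hintB : IntegrableOn (fun g : G => ⟪U g z, y⟫) B μ := hint z y hBmeas hBK hBfin
    have hintcomp : IntegrableOn (fun g : G => ⟪U (g * h) z, y⟫) A μ :=
      (hmp.integrableOn_image hmulemb (f := fun g : G => ⟪U g z, y⟫) (s := A)).1 hintB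
    have hsplit : (∫ g in A, ⟪U g z, y⟫ ∂μ) - ∫ g in B, ⟪U g z, y⟫ ∂μ
        = (∫ g in A \ B, ⟪U g z, y⟫ ∂μ) - ∫ g in B \ A, ⟪U g z, y⟫ ∂μ := by
      have h1 := integral_inter_add_diff (t := B) hBmeas hintA
      have h2 := integral_inter_add_diff (t := A) (hΛmeas α) hintB
      rw [Set.inter_comm B A] at h2
      rw [← h1, ← h2]; ring
    have hABfin : μ (A \ B) < ⊤ := lt_of_le_of_lt (measure_mono Set.diff_subset) hAfin
    have hBAfin : μ (B \ A) < ⊤ := lt_of_le_of_lt (measure_mono Set.diff_subset) hBfin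
    have hμdiff : μ (A ∆ B) = μ (A \ B) + μ (B \ A) := by
      rw [Set.symmDiff_def]
      exact measure_union disjoint_sdiff_sdiff (hBmeas.diff (hΛmeas α))
    have htΔ : (μ (A ∆ B)).toReal = (μ (A \ B)).toReal + (μ (B \ A)).toReal := by
      rw [hμdiff, ENNReal.toReal_add hABfin.ne hBAfin.ne]
    have b1 : ‖∫ g in A \ B, ⟪U g z, y⟫ ∂μ‖ ≤ (‖z‖ * ‖y‖) * (μ (A \ B)).toReal :=
      hnormint z y (fun g hg => hAK hg.1) hABfin
    have b2 : ‖∫ g in B \ A, ⟪U g z, y⟫ ∂μ‖ ≤ (‖z‖ * ‖y‖) * (μ (B \ A)).toReal :=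
      hnormint z y (fun g hg => hBK hg.1) hBAfin
    have hm0 : (0:ℝ) < (μ A).toReal := ENNReal.toReal_pos hpos.ne' hAfin.ne
    have hΔlt : (μ (A ∆ B)).toReal < (ε / (‖z‖ + 1)) * (μ A).toReal :=
      (div_lt_iff₀ hm0).1 hratio
    calc ‖∫ g in A, ⟪U g (z - U h z), y⟫ ∂μ‖
        = ‖(∫ g in A \ B, ⟪U g z, y⟫ ∂μ) - ∫ g in B \ A, ⟪U g z, y⟫ ∂μ‖ := by
          rw [setIntegral_congr_fun (hΛmeas α) heq, integral_sub hintA hintcomp, hchg, hsplit]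
    _ ≤ ‖∫ g in A \ B, ⟪U g z, y⟫ ∂μ‖ + ‖∫ g in B \ A, ⟪U g z, y⟫ ∂μ‖ := norm_sub_le _ _
    _ ≤ (‖z‖ * ‖y‖) * (μ (A ∆ B)).toReal := by rw [htΔ]; linarith
    _ ≤ ε * (μ A).toReal * ‖y‖ := by
        have hy0 : (0:ℝ) ≤ ‖y‖ := norm_nonneg y
        have hz0 : (0:ℝ) ≤ ‖z‖ := norm_nonneg z
        have hΔ0 : (0:ℝ) ≤ (μ (A ∆ B)).toReal := ENNReal.toReal_nonneg
        have key : ‖z‖ * (μ (A ∆ B)).toReal ≤ ε * (μ A).toReal := by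
          have h3 : ‖z‖ * (μ (A ∆ B)).toReal ≤ ‖z‖ * ((ε / (‖z‖ + 1)) * (μ A).toReal) :=
            mul_le_mul_of_nonneg_left hΔlt.le hz0
          have h4 : ‖z‖ * ((ε / (‖z‖ + 1)) * (μ A).toReal) ≤ ε * (μ A).toReal := by
            rw [div_mul_eq_mul_div, mul_div_assoc', div_le_iff₀ hCz]
            nlinarith [mul_nonneg hε.le hm0.le]
          linarith
        nlinarith
  -- x - P x lies in the closure of the span of the generators
  set S : Set H := {w : H | ∃ z : H, ∃ h ∈ K, w = z - U h z} with hS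
  set W : Submodule ℂ H := Submodule.span ℂ S with hW
  have hxPx : x - P x ∈ W.topologicalClosure := by
    rw [← Submodule.orthogonal_orthogonal_eq_closure, Submodule.mem_orthogonal]
    intro v hv
    have hvfix : ∀ h ∈ K, U h v = v := by
      intro h hh
      have hadj : (ContinuousLinearMap.adjoint (U h)) v = v := by
        refine ext_inner_left ℂ fun z => ?_
        rw [ContinuousLinearMap.adjoint_inner_right]
        have hgen : (z - U h z : H) ∈ W := Submodule.subset_span ⟨z, h, hh, rfl⟩
        have h0 := hv _ hgen
        rw [inner_sub_left, sub_eq_zero] at h0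
        exact h0.symm
      have hvv : ⟪U h v, v⟫ = ⟪v, v⟫ := by
        rw [← ContinuousLinearMap.adjoint_inner_right (U h) v v, hadj]
      have hre : RCLike.re ⟪U h v, v⟫ = ‖v‖ ^ 2 := by
        rw [hvv]; exact inner_self_eq_norm_sq v
      have hsq : ‖U h v - v‖ ^ 2 ≤ 0 := by
        have hexp := norm_sub_sq (𝕜 := ℂ) (E := H) (U h v) v
        have hle : ‖U h v‖ ^ 2 ≤ ‖v‖ ^ 2 :=
          pow_le_pow_left₀ (norm_nonneg _) (hUz v h hh) 2
        rw [hexp, hre]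
        linarith
      have : ‖U h v - v‖ = 0 := by nlinarith [norm_nonneg (U h v - v)]
      have := norm_eq_zero.1 this
      rwa [sub_eq_zero] at this
    have h0 := hPorth x v hvfix
    rw [← inner_conj_symm, h0, map_zero]
  have good_W : ∀ w ∈ W, Good w := by
    intro w hw
    refine Submodule.span_induction (fun w hw => ?_) good_zero
      (fun a b _ _ ha hb => good_add a b ha hb)
      (fun c a _ hc => good_smul c a hc) hw
    obtain ⟨z, h, hh, rfl⟩ := hw
    exact good_gen z h hh
  have good_x : Good (x - P x) := by
    intro ε hε
    have hmem : x - P x ∈ closure (W : Set H) := hxPx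
    obtain ⟨w, hwW, hwc⟩ := Metric.mem_closure_iff.1 hmem (ε/2) (by linarith)
    have hwsmall : ‖x - P x - w‖ ≤ ε/2 := by
      rw [dist_eq_norm] at hwc; exact hwc.le
    filter_upwards [good_W w hwW (ε/2) (by linarith)] with α hα y
    have hdecomp : Set.EqOn (fun g : G => ⟪U g (x - P x), y⟫)
        (fun g : G => ⟪U g w, y⟫ + ⟪U g (x - P x - w), y⟫) (Λ α) := by
      intro g _
      have h2 : U g (x - P x) = U g w + U g (x - P x - w) := by
        rw [← map_add]; congr 1; abel
      simp only [h2, inner_add_left]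
    rw [setIntegral_congr_fun (hΛmeas α) hdecomp,
      integral_add (hint w y (hΛmeas α) (hΛK α) (hΛfin α))
        (hint (x - P x - w) y (hΛmeas α) (hΛK α) (hΛfin α))]
    have b2 : ‖∫ g in Λ α, ⟪U g (x - P x - w), y⟫ ∂μ‖
        ≤ (‖x - P x - w‖ * ‖y‖) * (μ (Λ α)).toReal :=
      hnormint (x - P x - w) y (hΛK α) (hΛfin α)
    have hμ0 : (0:ℝ) ≤ (μ (Λ α)).toReal := ENNReal.toReal_nonneg
    have hy0 : (0:ℝ) ≤ ‖y‖ := norm_nonneg y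
    calc ‖(∫ g in Λ α, ⟪U g w, y⟫ ∂μ) + ∫ g in Λ α, ⟪U g (x - P x - w), y⟫ ∂μ‖
        ≤ ‖∫ g in Λ α, ⟪U g w, y⟫ ∂μ‖ + ‖∫ g in Λ α, ⟪U g (x - P x - w), y⟫ ∂μ‖ :=
          norm_add_le _ _
    _ ≤ ε/2 * (μ (Λ α)).toReal * ‖y‖ + (‖x - P x - w‖ * ‖y‖) * (μ (Λ α)).toReal :=
          add_le_add (hα y) b2
    _ ≤ ε * (μ (Λ α)).toReal * ‖y‖ := by nlinarith [mul_nonneg hμ0 hy0]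
  -- conclusion
  rw [Metric.tendsto_nhds]
  intro ε hε
  filter_upwards [good_x (ε/2) (by linarith), hΛpos] with α hα hpos
  set m : ℝ := (μ (Λ α)).toReal with hm
  have hm0 : 0 < m := ENNReal.toReal_pos hpos.ne' (hΛfin α).ne
  have hmC : ((m:ℂ)) ≠ 0 := by exact_mod_cast hm0.ne'
  set v : H := m⁻¹ • I α - P x with hv
  have hsmul : (m⁻¹ : ℝ) • I α = ((m:ℂ))⁻¹ • I α := by
    rw [← Complex.ofReal_inv, Complex.coe_smul]
  have hinner : ⟪v, v⟫ = ((m:ℂ))⁻¹ * (∫ g in Λ α, ⟪U g (x - P x), v⟫ ∂μ) := by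
    rw [← hkey α v, hv]
    rw [inner_sub_left, hsmul, inner_smul_left]
    rw [map_inv₀, Complex.conj_ofReal]
    field_simp
    rw [← hm]
    ring
  have hb := hα v
  have hnv2 : ‖v‖ ^ 2 ≤ (ε/2) * ‖v‖ := by
    have h2 : ‖v‖ ^ 2 = RCLike.re ⟪v, v⟫ := (inner_self_eq_norm_sq v).symm
    have h3 : RCLike.re ⟪v, v⟫ ≤ ‖⟪v, v⟫‖ := RCLike.re_le_norm _
    have h4 : ‖⟪v, v⟫‖ ≤ m⁻¹ * (ε/2 * m * ‖v‖) := by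
      rw [hinner, norm_mul]
      have h5 : ‖((m:ℂ))⁻¹‖ = m⁻¹ := by
        rw [norm_inv, Complex.norm_real, Real.norm_of_nonneg hm0.le]
      rw [h5]
      exact mul_le_mul_of_nonneg_left hb (by positivity)
    have h6 : m⁻¹ * (ε/2 * m * ‖v‖) = ε/2 * ‖v‖ := by
      field_simp
    linarith
  have hnv : ‖v‖ ≤ ε/2 := by nlinarith [norm_nonneg v]
  have : dist ((μ (Λ α)).toReal⁻¹ • I α) (P x) = ‖v‖ := by
    rw [dist_eq_norm, hv, hm]
  rw [this]
  linarith
end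

section
/- In the setting of the mean ergodic theorem, if x = y − U_h y for some y ∈ H and h ∈ K, then for any Borel Λ ⊆ K of finite positive measure, ‖(1/μ(Λ)) ∫_Λ U_g x dg‖ ≤ ‖y‖ · μ(Λ Δ (Λh))/μ(Λ). Consequently, along any space-filling net {Λ_α} in K, the averages (1/μ(Λ_α)) ∫_{Λ_α} U_g x dg converge to 0. -/
open MeasureTheory Filter
open scoped symmDiff

local notation "⟪" x ", " y "⟫" => @inner ℂ _ _ x y

/-- Auxiliary: a function measurable on the subtype `K` is a.e. strongly measurable
on the restriction of a measure to a measurable subset `Λ ⊆ K`. -/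
lemma aux_aesm {G : Type*} [MeasurableSpace G] {K : Set G} (hK : MeasurableSet K)
    {f : G → ℂ} (hf : Measurable fun g : K => f g) {Λ : Set G} (hΛK : Λ ⊆ K)
    (hΛ : MeasurableSet Λ) (μ : Measure G) :
    AEStronglyMeasurable f (μ.restrict Λ) := by
  set F : G → ℂ := Function.extend (Subtype.val : K → G) (fun g : K => f g) 0 with hF
  have hFmeas : Measurable F :=
    (MeasurableEmbedding.subtype_coe hK).measurable_extend hf measurable_const
  refine hFmeas.aestronglyMeasurable.congr ?_
  refine (ae_restrict_iff' hΛ).2 (ae_of_all _ fun a ha => ?_)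
  have haK : a ∈ K := hΛK ha
  have := Subtype.val_injective.extend_apply (fun g : K => f g) (0 : G → ℂ) ⟨a, haK⟩
  simpa [hF] using this

/-- If `x = y - U h y` with `h ∈ K`, then the average of the weak
integral of `g ↦ U g x` over a Borel set `Λ ⊆ K` of finite positive measure is
bounded by `‖y‖ · μ(Λ ∆ Λh)/μ(Λ)`; consequently along any space-filling net the
averages converge to `0`. -/
theorem mean_ergodic_coboundary_bound
    {G : Type*} [Group G] [TopologicalSpace G] [IsTopologicalGroup G]
    [LocallyCompactSpace G] [T2Space G] [MeasurableSpace G] [BorelSpace G]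
    (μ : Measure G) [μ.IsMulRightInvariant] [IsFiniteMeasureOnCompacts μ]
    [μ.IsOpenPosMeasure]
    (K : Set G) (hKmeas : MeasurableSet K)
    (hKmul : ∀ g ∈ K, ∀ h ∈ K, g * h ∈ K)
    {H : Type*} [NormedAddCommGroup H] [InnerProductSpace ℂ H] [CompleteSpace H]
    (U : G → H →L[ℂ] H)
    (hUcontr : ∀ g ∈ K, ‖U g‖ ≤ 1)
    (hUmul : ∀ g ∈ K, ∀ h ∈ K, ∀ x : H, U g (U h x) = U (g * h) x)
    (hUmeas : ∀ x y : H, Measurable fun g : K => ⟪U (g : G) x, y⟫)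
    -- `x` is a coboundary:
    (x y : H) (h : G) (hh : h ∈ K) (hx : x = y - U h y) :
    -- (a) the bound over any Borel `Λ ⊆ K` of finite positive measure:
    (∀ Λ : Set G, Λ ⊆ K → MeasurableSet Λ → 0 < μ Λ → μ Λ < ⊤ →
      ∀ I : H, (∀ z : H, ⟪I, z⟫ = ∫ g in Λ, ⟪U g x, z⟫ ∂μ) →
        ‖(μ Λ).toReal⁻¹ • I‖ ≤
          ‖y‖ * ((μ (Λ ∆ ((fun u => u * h) '' Λ))).toReal / (μ Λ).toReal)) ∧
    -- (b) convergence to `0` along any space-filling net in `K`: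
    (∀ {ι : Type} [Nonempty ι] [Preorder ι] [IsDirected ι (· ≤ ·)],
      ∀ Λ : ι → Set G, (∀ α, Λ α ⊆ K) → (∀ α, MeasurableSet (Λ α)) →
      (∀ α, μ (Λ α) < ⊤) → (∀ᶠ α in atTop, 0 < μ (Λ α)) →
      (∀ g ∈ K,
        Tendsto (fun α => (μ ((Λ α) ∆ ((fun u => u * g) '' (Λ α)))).toReal / (μ (Λ α)).toReal)
          atTop (nhds 0)) →
      ∀ I : ι → H, (∀ (α : ι) (z : H), ⟪I α, z⟫ = ∫ g in Λ α, ⟪U g x, z⟫ ∂μ) →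
        Tendsto (fun α => (μ (Λ α)).toReal⁻¹ • I α) atTop (nhds 0)) := by
  have key : ∀ Λ : Set G, Λ ⊆ K → MeasurableSet Λ → 0 < μ Λ → μ Λ < ⊤ →
      ∀ I : H, (∀ z : H, ⟪I, z⟫ = ∫ g in Λ, ⟪U g x, z⟫ ∂μ) →
        ‖(μ Λ).toReal⁻¹ • I‖ ≤
          ‖y‖ * ((μ (Λ ∆ ((fun u => u * h) '' Λ))).toReal / (μ Λ).toReal) := by
    intro Λ hΛK hΛmeas hΛpos hΛfin I hI
    set Λh : Set G := (fun u => u * h) '' Λ with hΛhdef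
    set e : G ≃ᵐ G := MeasurableEquiv.mulRight h with he
    have heΛ : Λh = e '' Λ := rfl
    have hΛhmeas : MeasurableSet Λh := by
      rw [heΛ]; exact e.measurableEmbedding.measurableSet_image' hΛmeas
    have hΛhK : Λh ⊆ K := by
      rintro _ ⟨g, hg, rfl⟩; exact hKmul g (hΛK hg) h hh
    have hΛheq : μ Λh = μ Λ := by
      have himg : Λh = (fun u => u * h⁻¹) ⁻¹' Λ := by
        ext g
        constructor
        · rintro ⟨a, ha, rfl⟩; simpa using ha
        · intro hg; exact ⟨g * h⁻¹, hg, by simp⟩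
      rw [himg, measure_preimage_mul_right]
    have hΛhfin : μ Λh < ⊤ := hΛheq ▸ hΛfin
    -- the main estimate on `⟪I, z⟫`
    have main : ∀ z : H, ‖⟪I, z⟫‖ ≤ ‖y‖ * ‖z‖ * (μ (Λ ∆ Λh)).toReal := by
      intro z
      set F : G → ℂ := fun g => ⟪U g y, z⟫ with hFdef
      have hFbd : ∀ g ∈ K, ‖F g‖ ≤ ‖y‖ * ‖z‖ := by
        intro g hg
        calc ‖F g‖ ≤ ‖U g y‖ * ‖z‖ := norm_inner_le_norm _ _
          _ ≤ (‖U g‖ * ‖y‖) * ‖z‖ := by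
              have := (U g).le_opNorm y
              exact mul_le_mul_of_nonneg_right this (norm_nonneg _)
          _ ≤ (1 * ‖y‖) * ‖z‖ := by
              have := hUcontr g hg
              gcongr
          _ = ‖y‖ * ‖z‖ := by ring
      have hIntOn : ∀ S : Set G, S ⊆ K → MeasurableSet S → μ S < ⊤ → IntegrableOn F S μ := by
        intro S hSK hSmeas hSfin
        refine ⟨aux_aesm hKmeas (hUmeas y z) hSK hSmeas μ,
          HasFiniteIntegral.restrict_of_bounded (C := ‖y‖ * ‖z‖) hSfin ?_⟩
        exact (ae_restrict_iff' hSmeas).2 (ae_of_all _ fun a ha => hFbd a (hSK ha))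
      have hIntΛ : IntegrableOn F Λ μ := hIntOn Λ hΛK hΛmeas hΛfin
      have hIntΛh : IntegrableOn F Λh μ := hIntOn Λh hΛhK hΛhmeas hΛhfin
      have hce : ⇑e = fun g => g * h := rfl
      have hmapμ : Measure.map e μ = μ := by
        rw [hce]; exact map_mul_right_eq_self μ h
      have hpre : e ⁻¹' Λh = Λ := by
        rw [heΛ]; exact Set.preimage_image_eq Λ e.injective
      have hmap : μ.restrict Λh = Measure.map e (μ.restrict Λ) := by
        conv_lhs => rw [← hmapμ]
        rw [Measure.restrict_map e.measurable hΛhmeas, hpre]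
      have hIntΛh' : IntegrableOn (fun g => F (g * h)) Λ μ := by
        have h2 := hIntΛh
        rw [IntegrableOn, hmap, e.measurableEmbedding.integrable_map_iff] at h2
        exact h2
      have hshift : ∫ g in Λh, F g ∂μ = ∫ g in Λ, F (g * h) ∂μ := by
        rw [show (μ.restrict Λh) = Measure.map e (μ.restrict Λ) from hmap,
          integral_map_equiv]
        rfl
      have hsplit : ⟪I, z⟫ = (∫ g in Λ, F g ∂μ) - ∫ g in Λh, F g ∂μ := by
        rw [hI z, hshift, ← integral_sub hIntΛ hIntΛh']
        refine setIntegral_congr_fun hΛmeas fun g hg => ?_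
        have hgK := hΛK hg
        simp only [hx, map_sub, inner_sub_left, hFdef]
        rw [hUmul g hgK h hh y]
      have a1 := integral_inter_add_diff (μ := μ) (f := F) (s := Λ) (t := Λh) hΛhmeas hIntΛ
      have a2 := integral_inter_add_diff (μ := μ) (f := F) (s := Λh) (t := Λ) hΛmeas hIntΛh
      have hsplit2 : ⟪I, z⟫ = (∫ g in Λ \ Λh, F g ∂μ) - ∫ g in Λh \ Λ, F g ∂μ := by
        rw [hsplit, ← a1, ← a2, Set.inter_comm]
        ring
      have hb1 : ‖∫ g in Λ \ Λh, F g ∂μ‖ ≤ (‖y‖ * ‖z‖) * (μ (Λ \ Λh)).toReal :=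
        norm_setIntegral_le_of_norm_le_const
          ((measure_mono Set.diff_subset).trans_lt hΛfin)
          (fun g hg => hFbd g (hΛK hg.1))
      have hb2 : ‖∫ g in Λh \ Λ, F g ∂μ‖ ≤ (‖y‖ * ‖z‖) * (μ (Λh \ Λ)).toReal :=
        norm_setIntegral_le_of_norm_le_const
          ((measure_mono Set.diff_subset).trans_lt hΛhfin)
          (fun g hg => hFbd g (hΛhK hg.1))
      have hμadd : (μ (Λ ∆ Λh)).toReal = (μ (Λ \ Λh)).toReal + (μ (Λh \ Λ)).toReal := by
        rw [Set.symmDiff_def,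
          measure_union (disjoint_sdiff_sdiff) (hΛhmeas.diff hΛmeas),
          ENNReal.toReal_add ((measure_mono Set.diff_subset).trans_lt hΛfin).ne
            ((measure_mono Set.diff_subset).trans_lt hΛhfin).ne]
      calc ‖⟪I, z⟫‖ = ‖(∫ g in Λ \ Λh, F g ∂μ) - ∫ g in Λh \ Λ, F g ∂μ‖ := by
            rw [hsplit2]
        _ ≤ ‖∫ g in Λ \ Λh, F g ∂μ‖ + ‖∫ g in Λh \ Λ, F g ∂μ‖ := norm_sub_le _ _
        _ ≤ (‖y‖ * ‖z‖) * (μ (Λ \ Λh)).toReal + (‖y‖ * ‖z‖) * (μ (Λh \ Λ)).toReal :=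
            add_le_add hb1 hb2
        _ = ‖y‖ * ‖z‖ * (μ (Λ ∆ Λh)).toReal := by rw [hμadd]; ring
    -- take `z := I`
    have hIbd : ‖I‖ ≤ ‖y‖ * (μ (Λ ∆ Λh)).toReal := by
      have h1 : ‖I‖ * ‖I‖ ≤ (‖y‖ * (μ (Λ ∆ Λh)).toReal) * ‖I‖ := by
        have := main I
        have h2 : ‖⟪I, I⟫‖ = ‖I‖ * ‖I‖ := by
          rw [inner_self_eq_norm_sq_to_K (𝕜 := ℂ)]
          simp [norm_pow, sq]
        rw [h2] at this
        calc ‖I‖ * ‖I‖ ≤ ‖y‖ * ‖I‖ * (μ (Λ ∆ Λh)).toReal := this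
          _ = (‖y‖ * (μ (Λ ∆ Λh)).toReal) * ‖I‖ := by ring
      rcases eq_or_lt_of_le (norm_nonneg I) with h0 | h0
      · rw [← h0]
        positivity
      · exact le_of_mul_le_mul_right h1 h0
    rw [norm_smul]
    have hμpos : (0:ℝ) < (μ Λ).toReal := ENNReal.toReal_pos hΛpos.ne' hΛfin.ne
    have : ‖((μ Λ).toReal⁻¹ : ℝ)‖ = (μ Λ).toReal⁻¹ := by
      rw [Real.norm_eq_abs, abs_of_nonneg (by positivity)]
    rw [this, div_eq_inv_mul, ← mul_assoc, mul_comm ‖y‖ ((μ Λ).toReal)⁻¹, mul_assoc]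
    exact mul_le_mul_of_nonneg_left hIbd (by positivity)
  refine ⟨key, ?_⟩
  intro ι _ _ _ Λ hΛK hΛmeas hΛfin hΛpos hratio I hI
  rw [tendsto_zero_iff_norm_tendsto_zero]
  refine squeeze_zero' (Eventually.of_forall fun α => norm_nonneg _)
    (hΛpos.mono fun α hpos =>
      key (Λ α) (hΛK α) (hΛmeas α) hpos (hΛfin α) (I α) (hI α)) ?_
  have := (hratio h hh).const_mul ‖y‖
  simpa using this
end

section
/- Hilbert space Khintchine recurrence: In the setting of the mean ergodic theorem with K abelian and {Λ_α} a space-filling net in K, for any x, y ∈ H and ε > 0 there exists an index α₀ such that |(1/μ(Λ_{α₀})) ∫_{Λ_{α₀} h} ⟨x, U_g y⟩ dg| > |⟨x, P y⟩| − ε for all h ∈ K. -/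
open MeasureTheory Filter
open scoped symmDiff

local notation "⟪" x ", " y "⟫" => @inner ℂ _ _ x y

/-- Auxiliary: the difference of integrals of a globally bounded measurable function over
two finite-measure sets is controlled by the measure of their symmetric difference. -/
lemma integral_diff_le_symmDiff {G : Type*} [MeasurableSpace G] (μ : Measure G)
    {f : G → ℂ} (hf : Measurable f) {C : ℝ} (hC : ∀ s, ‖f s‖ ≤ C)
    {A B : Set G} (hA : MeasurableSet A) (hB : MeasurableSet B)
    (hAfin : μ A < ⊤) (hBfin : μ B < ⊤) :
    ‖(∫ s in A, f s ∂μ) - ∫ s in B, f s ∂μ‖ ≤ C * (μ (A ∆ B)).toReal := by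
  have hIA : IntegrableOn f A μ := by
    refine Integrable.mono' (integrableOn_const hAfin.ne)
      hf.aestronglyMeasurable.restrict (Filter.Eventually.of_forall fun s => hC s)
  have hIB : IntegrableOn f B μ := by
    refine Integrable.mono' (integrableOn_const hBfin.ne)
      hf.aestronglyMeasurable.restrict (Filter.Eventually.of_forall fun s => hC s)
  have h1 : (∫ s in A ∩ B, f s ∂μ) + ∫ s in A \ B, f s ∂μ = ∫ s in A, f s ∂μ :=
    integral_inter_add_diff hB hIA
  have h2 : (∫ s in B ∩ A, f s ∂μ) + ∫ s in B \ A, f s ∂μ = ∫ s in B, f s ∂μ :=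
    integral_inter_add_diff hA hIB
  have hBA : B ∩ A = A ∩ B := Set.inter_comm B A
  have hdiff : (∫ s in A, f s ∂μ) - ∫ s in B, f s ∂μ
      = (∫ s in A \ B, f s ∂μ) - ∫ s in B \ A, f s ∂μ := by
    rw [← h1, ← h2, hBA]; ring
  have hfinAB : μ (A \ B) < ⊤ := (measure_mono Set.diff_subset).trans_lt hAfin
  have hfinBA : μ (B \ A) < ⊤ := (measure_mono Set.diff_subset).trans_lt hBfin
  have n1 : ‖∫ s in A \ B, f s ∂μ‖ ≤ C * (μ (A \ B)).toReal :=
    norm_setIntegral_le_of_norm_le_const hfinAB (fun s _ => hC s)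
  have n2 : ‖∫ s in B \ A, f s ∂μ‖ ≤ C * (μ (B \ A)).toReal :=
    norm_setIntegral_le_of_norm_le_const hfinBA (fun s _ => hC s)
  have hsd : μ (A ∆ B) = μ (A \ B) + μ (B \ A) := by
    rw [Set.symmDiff_def]
    exact measure_union (disjoint_sdiff_sdiff) (hB.diff hA)
  have htr : (μ (A ∆ B)).toReal = (μ (A \ B)).toReal + (μ (B \ A)).toReal := by
    rw [hsd, ENNReal.toReal_add hfinAB.ne hfinBA.ne]
  calc ‖(∫ s in A, f s ∂μ) - ∫ s in B, f s ∂μ‖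
      = ‖(∫ s in A \ B, f s ∂μ) - ∫ s in B \ A, f s ∂μ‖ := by rw [hdiff]
    _ ≤ ‖∫ s in A \ B, f s ∂μ‖ + ‖∫ s in B \ A, f s ∂μ‖ := norm_sub_le _ _
    _ ≤ C * (μ (A \ B)).toReal + C * (μ (B \ A)).toReal := add_le_add n1 n2
    _ = C * (μ (A ∆ B)).toReal := by rw [htr]; ring

/-- Auxiliary: change of variables for right translation. -/
lemma setIntegral_image_mulRight {G : Type*} [Group G] [MeasurableSpace G] [MeasurableMul G]
    (μ : Measure G) [μ.IsMulRightInvariant] (f : G → ℂ) (k : G) (A : Set G) :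
    ∫ s in (fun u => u * k) '' A, f s ∂μ = ∫ s in A, f (s * k) ∂μ := by
  have hemb : MeasurableEmbedding (fun u : G => u * k) := measurableEmbedding_mulRight k
  have hpre : (fun u : G => u * k) ⁻¹' ((fun u : G => u * k) '' A) = A :=
    Set.preimage_image_eq A (mul_left_injective k)
  have hmap : (μ.restrict A).map (fun u : G => u * k)
      = μ.restrict ((fun u : G => u * k) '' A) := by
    have := hemb.restrict_map μ ((fun u : G => u * k) '' A)
    rw [hpre] at this
    rw [← this, map_mul_right_eq_self μ k]
  have : ∫ s in (fun u => u * k) '' A, f s ∂μ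
      = ∫ s, f s ∂((μ.restrict A).map (fun u : G => u * k)) := by rw [hmap]
  rw [this]
  exact MeasureTheory.integral_map_equiv (MeasurableEquiv.mulRight k) f

/-- **Hilbert space Khintchine recurrence.** With `K` abelian, for any
`x, y` and `ε > 0` there is `α₀` such that the average of `⟨x, U_g y⟩` over every
right translate `Λ_{α₀} h`, `h ∈ K`, exceeds `|⟨x, P y⟩| − ε` in modulus. -/
theorem hilbert_khintchine_recurrence
    {G : Type*} [Group G] [TopologicalSpace G] [IsTopologicalGroup G]
    [LocallyCompactSpace G] [T2Space G] [MeasurableSpace G] [BorelSpace G]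
    (μ : Measure G) [μ.IsMulRightInvariant] [IsFiniteMeasureOnCompacts μ]
    [μ.IsOpenPosMeasure]
    (K : Set G) (hKmeas : MeasurableSet K)
    (hKmul : ∀ g ∈ K, ∀ h ∈ K, g * h ∈ K)
    (hKab : ∀ g ∈ K, ∀ h ∈ K, g * h = h * g)
    {H : Type*} [NormedAddCommGroup H] [InnerProductSpace ℂ H] [CompleteSpace H]
    (U : G → H →L[ℂ] H)
    (hUcontr : ∀ g ∈ K, ‖U g‖ ≤ 1)
    (hUmul : ∀ g ∈ K, ∀ h ∈ K, ∀ x : H, U g (U h x) = U (g * h) x)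
    (hUmeas : ∀ x y : H, Measurable fun g : K => ⟪U (g : G) x, y⟫)
    (P : H →L[ℂ] H)
    (hPfix : ∀ x : H, ∀ g ∈ K, U g (P x) = P x)
    (hPorth : ∀ x v : H, (∀ g ∈ K, U g v = v) → ⟪x - P x, v⟫ = 0)
    {ι : Type*} [Nonempty ι] [Preorder ι] [IsDirected ι (· ≤ ·)]
    (Λ : ι → Set G) (hΛK : ∀ α, Λ α ⊆ K) (hΛmeas : ∀ α, MeasurableSet (Λ α))
    (hΛfin : ∀ α, μ (Λ α) < ⊤)
    (hΛpos : ∀ᶠ α in atTop, 0 < μ (Λ α))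
    (hFolner : ∀ g ∈ K,
      Tendsto (fun α => (μ ((Λ α) ∆ ((fun u => u * g) '' (Λ α)))).toReal / (μ (Λ α)).toReal)
        atTop (nhds 0))
    (x y : H) (ε : ℝ) (hε : 0 < ε) :
    ∃ α₀ : ι, ∀ h ∈ K,
      ‖(μ (Λ α₀)).toReal⁻¹ • ∫ g in (fun u => u * h) '' (Λ α₀), ⟪x, U g y⟫ ∂μ‖ >
        ‖⟪x, P y⟫‖ - ε := by
  classical
  -- the truncated matrix coefficient
  obtain ⟨f, hfK, hf0, hfm, hfb⟩ : ∃ f : H → G → ℂ,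
      (∀ v : H, ∀ s ∈ K, f v s = ⟪x, U s v⟫) ∧ (∀ v : H, ∀ s ∉ K, f v s = 0) ∧
      (∀ v : H, Measurable (f v)) ∧ (∀ (v : H) (s : G), ‖f v s‖ ≤ ‖x‖ * ‖v‖) := by
    refine ⟨fun v s => if hs : s ∈ K then ⟪x, U s v⟫ else 0,
      fun v s hs => dif_pos hs, fun v s hs => dif_neg hs, fun v => ?_, fun v s => ?_⟩
    · have hmeasc : Measurable fun s : K => (⟪x, U (s : G) v⟫ : ℂ) := by
        have h1 := hUmeas v x
        have h2 : (fun s : K => (⟪x, U (s : G) v⟫ : ℂ))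
            = fun s : K => (starRingEnd ℂ) (⟪U (s : G) v, x⟫ : ℂ) := by
          funext s; rw [inner_conj_symm]
        rw [h2]
        exact (Complex.continuous_conj.measurable).comp h1
      exact Measurable.dite hmeasc measurable_const hKmeas
    · by_cases hs : s ∈ K
      · simp only [dif_pos hs]
        calc ‖(⟪x, U s v⟫ : ℂ)‖ ≤ ‖x‖ * ‖U s v‖ := norm_inner_le_norm _ _
          _ ≤ ‖x‖ * ‖v‖ := by
              refine mul_le_mul_of_nonneg_left ?_ (norm_nonneg x)
              calc ‖U s v‖ ≤ ‖U s‖ * ‖v‖ := (U s).le_opNorm v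
                _ ≤ 1 * ‖v‖ := mul_le_mul_of_nonneg_right (hUcontr s hs) (norm_nonneg v)
                _ = ‖v‖ := one_mul _
      · simp only [dif_neg hs, norm_zero]
        positivity
  have hfadd : ∀ (a b : H) (s : G), f (a + b) s = f a s + f b s := by
    intro a b s
    by_cases hs : s ∈ K
    · rw [hfK _ s hs, hfK _ s hs, hfK _ s hs, map_add, inner_add_right]
    · rw [hf0 _ s hs, hf0 _ s hs, hf0 _ s hs, add_zero]
  have hfsmul : ∀ (c : ℂ) (a : H) (s : G), f (c • a) s = c * f a s := by
    intro c a s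
    by_cases hs : s ∈ K
    · rw [hfK _ s hs, hfK _ s hs, ContinuousLinearMap.map_smul, inner_smul_right]
    · rw [hf0 _ s hs, hf0 _ s hs, mul_zero]
  -- integrability of translated truncations
  have hInt : ∀ (v : H) (k : G) {A : Set G}, MeasurableSet A → μ A < ⊤ →
      IntegrableOn (fun s => f v (s * k)) A μ := by
    intro v k A hA hAfin
    refine Integrable.mono' (integrableOn_const hAfin.ne)
      (((hfm v).comp (measurable_mul_const k)).aestronglyMeasurable.restrict)
      (Filter.Eventually.of_forall fun s => hfb v (s * k))
  -- the set of coboundaries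
  set S : Set H := {w : H | ∃ k ∈ K, ∃ u : H, w = U k u - u} with hS
  -- Key estimate: uniform-in-`h` smallness of averages of coboundary span elements
  have key : ∀ v ∈ Submodule.span ℂ S, ∀ η : ℝ, 0 < η →
      ∀ᶠ α in atTop, ∀ h ∈ K,
        ‖∫ g in Λ α, f v (g * h) ∂μ‖ ≤ η * (μ (Λ α)).toReal := by
    intro v hv
    induction hv using Submodule.span_induction with
    | mem w hw =>
      obtain ⟨k, hk, u, rfl⟩ := hw
      intro η hη
      set C : ℝ := ‖x‖ * ‖u‖ with hC
      have hC0 : 0 ≤ C := by positivity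
      have hfol := (hFolner k hk).eventually_lt_const
        (show (0:ℝ) < η / (C + 1) by positivity)
      filter_upwards [hfol, hΛpos] with α hrat hpos
      intro h hh
      have hmpos : 0 < (μ (Λ α)).toReal := ENNReal.toReal_pos hpos.ne' (hΛfin α).ne
      -- pointwise identity on Λ α
      have hpt : ∀ g ∈ Λ α, f (U k u - u) (g * h) = f (U h u) (g * k) - f (U h u) g := by
        intro g hg
        have hgK : g ∈ K := hΛK α hg
        have hghK : g * h ∈ K := hKmul g hgK h hh
        have hgkK : g * k ∈ K := hKmul g hgK k hk
        rw [hfK _ _ hghK, hfK _ _ hgkK, hfK _ _ hgK]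
        rw [map_sub, inner_sub_right, ← inner_sub_right, ← inner_sub_right]
        congr 1
        have e1 : U (g * h) (U k u) = U (g * k) (U h u) := by
          rw [hUmul (g * h) hghK k hk, hUmul (g * k) hgkK h hh]
          rw [mul_assoc, mul_assoc, hKab h hh k hk]
        have e2 : U (g * h) u = U g (U h u) := (hUmul g hgK h hh u).symm
        rw [e1, e2]
      have hint1 : IntegrableOn (fun g => f (U h u) (g * k)) (Λ α) μ :=
        hInt (U h u) k (hΛmeas α) (hΛfin α)
      have hint2 : IntegrableOn (fun g => f (U h u) g) (Λ α) μ := by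
        simpa using hInt (U h u) 1 (hΛmeas α) (hΛfin α)
      have hsplit : ∫ g in Λ α, f (U k u - u) (g * h) ∂μ
          = (∫ g in Λ α, f (U h u) (g * k) ∂μ) - ∫ g in Λ α, f (U h u) g ∂μ := by
        rw [← integral_sub hint1 hint2]
        exact setIntegral_congr_fun (hΛmeas α) hpt
      have hchg : ∫ g in Λ α, f (U h u) (g * k) ∂μ
          = ∫ g in (fun u' => u' * k) '' (Λ α), f (U h u) g ∂μ :=
        (setIntegral_image_mulRight μ (f (U h u)) k (Λ α)).symm
      have himgmeas : MeasurableSet ((fun u' => u' * k) '' (Λ α)) :=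
        ((measurableEmbedding_mulRight k).measurableSet_image).2 (hΛmeas α)
      have himgfin : μ ((fun u' => u' * k) '' (Λ α)) < ⊤ := by
        have heq : μ ((fun u' => u' * k) '' (Λ α)) = μ (Λ α) := by
          calc μ ((fun u' => u' * k) '' (Λ α))
              = (Measure.map (fun u' => u' * k) μ) ((fun u' => u' * k) '' (Λ α)) := by
                rw [map_mul_right_eq_self]
            _ = μ ((fun u' => u' * k) ⁻¹' ((fun u' => u' * k) '' (Λ α))) :=
                MeasureTheory.Measure.map_apply (measurable_mul_const k) himgmeas
            _ = μ (Λ α) := by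
                rw [Set.preimage_image_eq (Λ α) (mul_left_injective k)]
        rw [heq]; exact hΛfin α
      have hwnorm : ∀ s : G, ‖f (U h u) s‖ ≤ C := by
        intro s
        calc ‖f (U h u) s‖ ≤ ‖x‖ * ‖U h u‖ := hfb _ s
          _ ≤ ‖x‖ * ‖u‖ := by
              refine mul_le_mul_of_nonneg_left ?_ (norm_nonneg x)
              calc ‖U h u‖ ≤ ‖U h‖ * ‖u‖ := (U h).le_opNorm u
                _ ≤ 1 * ‖u‖ := mul_le_mul_of_nonneg_right (hUcontr h hh) (norm_nonneg u)
                _ = ‖u‖ := one_mul _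
      have hbd : ‖∫ g in Λ α, f (U k u - u) (g * h) ∂μ‖
          ≤ C * (μ ((Λ α) ∆ ((fun u' => u' * k) '' (Λ α)))).toReal := by
        rw [hsplit, hchg]
        have := integral_diff_le_symmDiff μ (hfm (U h u)) hwnorm himgmeas (hΛmeas α)
          himgfin (hΛfin α)
        calc ‖(∫ g in (fun u' => u' * k) '' (Λ α), f (U h u) g ∂μ)
              - ∫ g in Λ α, f (U h u) g ∂μ‖
            ≤ C * (μ (((fun u' => u' * k) '' (Λ α)) ∆ (Λ α))).toReal := this
          _ = C * (μ ((Λ α) ∆ ((fun u' => u' * k) '' (Λ α)))).toReal := by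
              rw [symmDiff_comm]
      refine hbd.trans ?_
      have hratio := hrat
      rw [div_lt_iff₀ hmpos] at hratio
      have : C * (μ ((Λ α) ∆ ((fun u' => u' * k) '' (Λ α)))).toReal
          ≤ C * (η / (C + 1) * (μ (Λ α)).toReal) :=
        mul_le_mul_of_nonneg_left hratio.le hC0
      refine this.trans ?_
      have hCC : C / (C + 1) ≤ 1 := by
        rw [div_le_one (by positivity)]; linarith
      have : C * (η / (C + 1) * (μ (Λ α)).toReal)
          = (C / (C + 1)) * (η * (μ (Λ α)).toReal) := by ring
      rw [this]
      nlinarith [mul_nonneg hη.le hmpos.le]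
    | zero =>
      intro η hη
      refine Filter.Eventually.of_forall fun α => fun h _ => ?_
      have : ∀ g ∈ Λ α, f (0 : H) (g * h) = 0 := by
        intro g hg
        by_cases hgh : g * h ∈ K
        · rw [hfK _ _ hgh, map_zero, inner_zero_right]
        · exact hf0 _ _ hgh
      rw [setIntegral_congr_fun (hΛmeas α) this]
      simp only [integral_zero, norm_zero]
      positivity
    | add a b ha hb iha ihb =>
      intro η hη
      filter_upwards [iha (η / 2) (by positivity), ihb (η / 2) (by positivity)]
        with α h1 h2
      intro h hh
      have hia : IntegrableOn (fun g => f a (g * h)) (Λ α) μ :=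
        hInt a h (hΛmeas α) (hΛfin α)
      have hib : IntegrableOn (fun g => f b (g * h)) (Λ α) μ :=
        hInt b h (hΛmeas α) (hΛfin α)
      have : ∫ g in Λ α, f (a + b) (g * h) ∂μ
          = (∫ g in Λ α, f a (g * h) ∂μ) + ∫ g in Λ α, f b (g * h) ∂μ := by
        rw [← integral_add hia hib]
        exact setIntegral_congr_fun (hΛmeas α) fun g _ => hfadd a b (g * h)
      rw [this]
      calc ‖(∫ g in Λ α, f a (g * h) ∂μ) + ∫ g in Λ α, f b (g * h) ∂μ‖
          ≤ ‖∫ g in Λ α, f a (g * h) ∂μ‖ + ‖∫ g in Λ α, f b (g * h) ∂μ‖ := norm_add_le _ _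
        _ ≤ η / 2 * (μ (Λ α)).toReal + η / 2 * (μ (Λ α)).toReal :=
            add_le_add (h1 h hh) (h2 h hh)
        _ = η * (μ (Λ α)).toReal := by ring
    | smul c a ha iha =>
      intro η hη
      filter_upwards [iha (η / (‖c‖ + 1)) (by positivity)] with α h1
      intro h hh
      have : ∫ g in Λ α, f (c • a) (g * h) ∂μ = c * ∫ g in Λ α, f a (g * h) ∂μ := by
        rw [← integral_const_mul]
        exact setIntegral_congr_fun (hΛmeas α) fun g _ => hfsmul c a (g * h)
      rw [this, norm_mul]
      have hb := h1 h hh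
      have hc0 : (0:ℝ) ≤ ‖c‖ := norm_nonneg c
      have hcc : ‖c‖ / (‖c‖ + 1) ≤ 1 := by
        rw [div_le_one (by positivity)]; linarith
      have h2 : ‖c‖ * ‖∫ g in Λ α, f a (g * h) ∂μ‖
          ≤ ‖c‖ * (η / (‖c‖ + 1) * (μ (Λ α)).toReal) :=
        mul_le_mul_of_nonneg_left hb hc0
      refine h2.trans ?_
      have : ‖c‖ * (η / (‖c‖ + 1) * (μ (Λ α)).toReal)
          = (‖c‖ / (‖c‖ + 1)) * (η * (μ (Λ α)).toReal) := by ring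
      rw [this]
      nlinarith [mul_nonneg hη.le (ENNReal.toReal_nonneg (a := μ (Λ α)))]
  -- y - P y belongs to the closure of the span of coboundaries
  set W : Submodule ℂ H := (Submodule.span ℂ S).topologicalClosure with hW
  haveI : CompleteSpace W := (Submodule.isClosed_topologicalClosure _).completeSpace_coe
  have hyW : y - P y ∈ W := by
    rw [← Submodule.orthogonal_orthogonal W]
    rw [Submodule.mem_orthogonal]
    intro u hu
    have hufix : ∀ k ∈ K, U k u = u := by
      intro k hk
      have h1 : (⟪U k u - u, u⟫ : ℂ) = 0 := by
        have hmem : U k u - u ∈ W :=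
          Submodule.le_topologicalClosure _ (Submodule.subset_span ⟨k, hk, u, rfl⟩)
        exact (Submodule.mem_orthogonal W u).1 hu _ hmem
      have h2 : (⟪U k u, u⟫ : ℂ) = ⟪u, u⟫ := by
        rw [inner_sub_left] at h1
        linear_combination h1
      have h3 : RCLike.re (⟪U k u, u⟫ : ℂ) = ‖u‖ ^ 2 := by
        rw [h2]; exact inner_self_eq_norm_sq u
      have h4 : ‖U k u‖ ≤ ‖u‖ := by
        calc ‖U k u‖ ≤ ‖U k‖ * ‖u‖ := (U k).le_opNorm u
          _ ≤ 1 * ‖u‖ := mul_le_mul_of_nonneg_right (hUcontr k hk) (norm_nonneg u)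
          _ = ‖u‖ := one_mul _
      have h5 : ‖U k u - u‖ ^ 2 ≤ 0 := by
        rw [norm_sub_sq (𝕜 := ℂ), h3]
        nlinarith [norm_nonneg (U k u), norm_nonneg u]
      have h6 : U k u - u = 0 := by
        have := sq_nonneg ‖U k u - u‖
        have h7 : ‖U k u - u‖ ^ 2 = 0 := le_antisymm h5 this
        have h8 : ‖U k u - u‖ = 0 := by
          nlinarith [norm_nonneg (U k u - u)]
        exact norm_eq_zero.1 h8
      exact sub_eq_zero.1 h6
    have := hPorth y u hufix
    rw [← inner_conj_symm, this, map_zero]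
  have hyclos : y - P y ∈ closure ((Submodule.span ℂ S : Set H)) := by
    rw [← Submodule.topologicalClosure_coe]
    exact hyW
  -- approximate y - P y by an element of the span
  have hδ : (0:ℝ) < ε / (4 * (‖x‖ + 1)) := by positivity
  obtain ⟨z, hzS, hzd⟩ := Metric.mem_closure_iff.1 hyclos (ε / (4 * (‖x‖ + 1))) hδ
  set r : H := (y - P y) - z with hr
  have hrn : ‖r‖ < ε / (4 * (‖x‖ + 1)) := by
    rw [hr, ← dist_eq_norm]
    exact hzd
  -- choose the index
  haveI : (atTop : Filter ι).NeBot :=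
    atTop_neBot_iff.mpr ⟨‹Nonempty ι›, ‹IsDirected ι (· ≤ ·)›⟩
  obtain ⟨α₀, hQ, hpos⟩ := ((key z hzS (ε / 4) (by positivity)).and hΛpos).exists
  refine ⟨α₀, ?_⟩
  intro h hh
  set A : Set G := Λ α₀ with hA
  set mA : ℝ := (μ A).toReal with hmA
  have hmApos : 0 < mA := ENNReal.toReal_pos hpos.ne' (hΛfin α₀).ne
  have himgmeas : MeasurableSet ((fun u => u * h) '' A) :=
    ((measurableEmbedding_mulRight h).measurableSet_image).2 (hΛmeas α₀)
  -- rewrite the integral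
  have step1 : ∫ g in (fun u => u * h) '' A, ⟪x, U g y⟫ ∂μ
      = ∫ g in (fun u => u * h) '' A, f y g ∂μ := by
    refine setIntegral_congr_fun himgmeas ?_
    rintro g ⟨a, ha, rfl⟩
    exact (hfK y _ (hKmul a (hΛK α₀ ha) h hh)).symm
  have step2 : ∫ g in (fun u => u * h) '' A, f y g ∂μ = ∫ g in A, f y (g * h) ∂μ :=
    setIntegral_image_mulRight μ (f y) h A
  have hdecomp : ∀ s : G, f y s = f (P y) s + f z s + f r s := by
    intro s
    have hyy : y = P y + z + r := by rw [hr]; abel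
    calc f y s = f (P y + z + r) s := by rw [← hyy]
      _ = f (P y + z) s + f r s := hfadd _ _ s
      _ = f (P y) s + f z s + f r s := by rw [hfadd _ _ s]
  have hiP : IntegrableOn (fun g => f (P y) (g * h)) A μ :=
    hInt (P y) h (hΛmeas α₀) (hΛfin α₀)
  have hiz : IntegrableOn (fun g => f z (g * h)) A μ :=
    hInt z h (hΛmeas α₀) (hΛfin α₀)
  have hir : IntegrableOn (fun g => f r (g * h)) A μ :=
    hInt r h (hΛmeas α₀) (hΛfin α₀)
  have step3 : ∫ g in A, f y (g * h) ∂μ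
      = (∫ g in A, f (P y) (g * h) ∂μ) + (∫ g in A, f z (g * h) ∂μ)
        + ∫ g in A, f r (g * h) ∂μ := by
    calc ∫ g in A, f y (g * h) ∂μ
        = ∫ g in A, (f (P y) (g * h) + f z (g * h) + f r (g * h)) ∂μ :=
          setIntegral_congr_fun (hΛmeas α₀) fun g _ => hdecomp (g * h)
      _ = (∫ g in A, f (P y) (g * h) ∂μ) + (∫ g in A, f z (g * h) ∂μ)
            + ∫ g in A, f r (g * h) ∂μ := by
          have e1 := integral_add (hiP.add hiz) hir
          simp only [Pi.add_apply] at e1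
          rw [e1, integral_add hiP hiz]
  have step4 : ∫ g in A, f (P y) (g * h) ∂μ = mA • (⟪x, P y⟫ : ℂ) := by
    have : ∀ g ∈ A, f (P y) (g * h) = ⟪x, P y⟫ := by
      intro g hg
      have hghK : g * h ∈ K := hKmul g (hΛK α₀ hg) h hh
      rw [hfK _ _ hghK, hPfix y (g * h) hghK]
    rw [setIntegral_congr_fun (hΛmeas α₀) this, setIntegral_const]; rfl
  -- norm bounds on the error terms
  have hz_bd : ‖∫ g in A, f z (g * h) ∂μ‖ ≤ ε / 4 * mA := hQ h hh
  have hr_bd : ‖∫ g in A, f r (g * h) ∂μ‖ ≤ ε / 4 * mA := by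
    have hb : ∀ g ∈ A, ‖f r (g * h)‖ ≤ ‖x‖ * ‖r‖ := fun g _ => hfb r (g * h)
    have := norm_setIntegral_le_of_norm_le_const (hΛfin α₀) hb
    refine this.trans ?_
    refine mul_le_mul_of_nonneg_right ?_ ENNReal.toReal_nonneg
    have h1 : ‖x‖ * ‖r‖ ≤ ‖x‖ * (ε / (4 * (‖x‖ + 1))) :=
      mul_le_mul_of_nonneg_left hrn.le (norm_nonneg x)
    refine h1.trans ?_
    have hx1 : ‖x‖ / (‖x‖ + 1) ≤ 1 := by
      rw [div_le_one (by positivity)]; linarith [norm_nonneg x]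
    have heq : ‖x‖ * (ε / (4 * (‖x‖ + 1))) = (‖x‖ / (‖x‖ + 1)) * (ε / 4) := by
      rw [mul_div_assoc', div_mul_div_comm,
        div_eq_div_iff (by positivity) (by positivity)]
      ring
    rw [heq]
    calc (‖x‖ / (‖x‖ + 1)) * (ε / 4) ≤ 1 * (ε / 4) :=
          mul_le_mul_of_nonneg_right hx1 (by positivity)
      _ = ε / 4 := one_mul _
  -- assembling
  have havg : (μ (Λ α₀)).toReal⁻¹ • (∫ g in (fun u => u * h) '' (Λ α₀), ⟪x, U g y⟫ ∂μ)
      = (⟪x, P y⟫ : ℂ) + mA⁻¹ • ((∫ g in A, f z (g * h) ∂μ) + ∫ g in A, f r (g * h) ∂μ) := by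
    have hmA' : (μ (Λ α₀)).toReal⁻¹ = mA⁻¹ := rfl
    rw [hmA', step1, step2, step3, step4, add_assoc, smul_add, smul_smul]
    rw [inv_mul_cancel₀ hmApos.ne', one_smul]
  rw [havg]
  have herr : ‖mA⁻¹ • ((∫ g in A, f z (g * h) ∂μ) + ∫ g in A, f r (g * h) ∂μ)‖ ≤ ε / 2 := by
    rw [norm_smul, Real.norm_eq_abs, abs_of_nonneg (inv_nonneg.2 hmApos.le)]
    have hn : ‖(∫ g in A, f z (g * h) ∂μ) + ∫ g in A, f r (g * h) ∂μ‖
        ≤ ε / 4 * mA + ε / 4 * mA :=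
      (norm_add_le _ _).trans (add_le_add hz_bd hr_bd)
    calc mA⁻¹ * ‖(∫ g in A, f z (g * h) ∂μ) + ∫ g in A, f r (g * h) ∂μ‖
        ≤ mA⁻¹ * (ε / 4 * mA + ε / 4 * mA) :=
          mul_le_mul_of_nonneg_left hn (inv_nonneg.2 hmApos.le)
      _ = (mA⁻¹ * mA) * (ε / 2) := by ring
      _ = ε / 2 := by rw [inv_mul_cancel₀ hmApos.ne', one_mul]
  have hlow : ‖(⟪x, P y⟫ : ℂ)‖ - ‖mA⁻¹ • ((∫ g in A, f z (g * h) ∂μ)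
      + ∫ g in A, f r (g * h) ∂μ)‖
      ≤ ‖(⟪x, P y⟫ : ℂ) + mA⁻¹ • ((∫ g in A, f z (g * h) ∂μ)
        + ∫ g in A, f r (g * h) ∂μ)‖ := by
    have := norm_add_le ((⟪x, P y⟫ : ℂ) + mA⁻¹ • ((∫ g in A, f z (g * h) ∂μ)
      + ∫ g in A, f r (g * h) ∂μ))
      (-(mA⁻¹ • ((∫ g in A, f z (g * h) ∂μ) + ∫ g in A, f r (g * h) ∂μ)))
    simp only [add_neg_cancel_right, norm_neg] at this
    linarith
  linarith [herr, hlow]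
end

section
/- In the setting of the Hilbert space Khintchine recurrence theorem (K abelian), for any x, y ∈ H and ε > 0 there exists α₀ such that for every h ∈ K there is some g ∈ Λ_{α₀} h with |⟨x, U_g y⟩| > |⟨x, P y⟩| − ε. -/
open MeasureTheory Filter
open scoped symmDiff

local notation "⟪" x ", " y "⟫" => @inner ℂ _ _ x y

lemma fixed_of_adjoint_fixed' {H : Type*} [NormedAddCommGroup H] [InnerProductSpace ℂ H]
    [CompleteSpace H] (T : H →L[ℂ] H) (hT : ‖T‖ ≤ 1) (v : H)
    (hv : ContinuousLinearMap.adjoint T v = v) : T v = v := by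
  have h1 : ⟪v, T v⟫ = ⟪v, v⟫ := by
    rw [← ContinuousLinearMap.adjoint_inner_left T, hv]
  have hnorm : ‖T v‖ ≤ ‖v‖ := by
    calc ‖T v‖ ≤ ‖T‖ * ‖v‖ := T.le_opNorm v
    _ ≤ 1 * ‖v‖ := by nlinarith [norm_nonneg v]
    _ = ‖v‖ := one_mul _
  have h2 : ‖T v - v‖ ^ 2 ≤ 0 := by
    have hsq := @norm_sub_sq ℂ _ _ _ _ (T v) v
    have hre : RCLike.re ⟪T v, v⟫ = ‖v‖ ^ 2 := by
      rw [inner_re_symm, h1, inner_self_eq_norm_sq]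
    rw [hsq, hre]
    nlinarith [norm_nonneg v, norm_nonneg (T v), hnorm]
  have h3 : ‖T v - v‖ = 0 := by nlinarith [norm_nonneg (T v - v)]
  rw [← sub_eq_zero]
  exact norm_eq_zero.mp h3

set_option maxHeartbeats 2000000 in
/-- **Hilbert space Khintchine recurrence, pointwise form.** With `K`
abelian, for any `x, y` and `ε > 0` there is `α₀` such that for every `h ∈ K` some
`g ∈ Λ_{α₀} h` satisfies `|⟨x, U_g y⟩| > |⟨x, P y⟩| − ε`. -/
theorem hilbert_khintchine_recurrence_pointwise
    {G : Type*} [Group G] [TopologicalSpace G] [IsTopologicalGroup G]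
    [LocallyCompactSpace G] [T2Space G] [MeasurableSpace G] [BorelSpace G]
    (μ : Measure G) [μ.IsMulRightInvariant] [IsFiniteMeasureOnCompacts μ]
    [μ.IsOpenPosMeasure]
    (K : Set G) (hKmeas : MeasurableSet K)
    (hKmul : ∀ g ∈ K, ∀ h ∈ K, g * h ∈ K)
    (hKab : ∀ g ∈ K, ∀ h ∈ K, g * h = h * g)
    {H : Type*} [NormedAddCommGroup H] [InnerProductSpace ℂ H] [CompleteSpace H]
    (U : G → H →L[ℂ] H)
    (hUcontr : ∀ g ∈ K, ‖U g‖ ≤ 1)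
    (hUmul : ∀ g ∈ K, ∀ h ∈ K, ∀ x : H, U g (U h x) = U (g * h) x)
    (hUmeas : ∀ x y : H, Measurable fun g : K => ⟪U (g : G) x, y⟫)
    (P : H →L[ℂ] H)
    (hPfix : ∀ x : H, ∀ g ∈ K, U g (P x) = P x)
    (hPorth : ∀ x v : H, (∀ g ∈ K, U g v = v) → ⟪x - P x, v⟫ = 0)
    {ι : Type*} [Nonempty ι] [Preorder ι] [IsDirected ι (· ≤ ·)]
    (Λ : ι → Set G) (hΛK : ∀ α, Λ α ⊆ K) (hΛmeas : ∀ α, MeasurableSet (Λ α))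
    (hΛfin : ∀ α, μ (Λ α) < ⊤)
    (hΛpos : ∀ᶠ α in atTop, 0 < μ (Λ α))
    (hFolner : ∀ g ∈ K,
      Tendsto (fun α => (μ ((Λ α) ∆ ((fun u => u * g) '' (Λ α)))).toReal / (μ (Λ α)).toReal)
        atTop (nhds 0))
    (x y : H) (ε : ℝ) (hε : 0 < ε) :
    ∃ α₀ : ι, ∀ h ∈ K, ∃ g ∈ (fun u => u * h) '' (Λ α₀),
      ‖⟪x, U g y⟫‖ > ‖⟪x, P y⟫‖ - ε := by
  classical
  haveI : (atTop : Filter ι).NeBot := atTop_neBot_iff.mpr ⟨inferInstance, inferInstance⟩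
  set z : H := y - P y with hz_def
  -- the globally defined integrand
  set E : H → H → G → ℂ := fun a w =>
    Function.extend (Subtype.val : K → G) (fun g : K => ⟪U (g : G) a, w⟫) (fun _ => 0)
    with hE_def
  have hKemb : MeasurableEmbedding (Subtype.val : K → G) :=
    MeasurableEmbedding.subtype_coe hKmeas
  have hEmeas : ∀ a w, Measurable (E a w) := fun a w =>
    hKemb.measurable_extend (hUmeas a w) measurable_const
  have hEeq : ∀ a w : H, ∀ g ∈ K, E a w g = ⟪U g a, w⟫ := by
    intro a w g hg
    have h := Subtype.val_injective.extend_apply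
      (fun g : K => ⟪U (g : G) a, w⟫) (fun _ => (0 : ℂ)) (⟨g, hg⟩ : K)
    simpa [hE_def] using h
  have hEbound : ∀ a w : H, ∀ g : G, ‖E a w g‖ ≤ ‖a‖ * ‖w‖ := by
    intro a w g
    by_cases hg : g ∈ K
    · rw [hEeq a w g hg]
      calc ‖⟪U g a, w⟫‖ ≤ ‖U g a‖ * ‖w‖ := norm_inner_le_norm _ _
        _ ≤ ‖a‖ * ‖w‖ := by
            have h1 : ‖U g a‖ ≤ ‖U g‖ * ‖a‖ := (U g).le_opNorm a
            have h2 : ‖U g‖ ≤ 1 := hUcontr g hg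
            have h3 : ‖U g a‖ ≤ ‖a‖ := by
              nlinarith [norm_nonneg a, mul_le_mul_of_nonneg_right h2 (norm_nonneg a)]
            exact mul_le_mul_of_nonneg_right h3 (norm_nonneg w)
    · have h0 : E a w g = 0 := by
        rw [hE_def]
        exact Function.extend_apply' _ _ _ (by simpa [Subtype.range_val] using hg)
      rw [h0, norm_zero]
      positivity
  have hIntB : ∀ (f : G → ℂ) (C : ℝ), Measurable f → (∀ g, ‖f g‖ ≤ C) →
      ∀ (s : Set G), μ s < ⊤ → IntegrableOn f s μ := by
    intro f C hf hb s hfin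
    exact Measure.integrableOn_of_bounded hfin.ne hf.aestronglyMeasurable
      (Eventually.of_forall hb)
  have hInt : ∀ a w : H, ∀ α, IntegrableOn (E a w) (Λ α) μ := fun a w α =>
    hIntB (E a w) (‖a‖ * ‖w‖) (hEmeas a w) (hEbound a w) _ (hΛfin α)
  -- difference of integrals over two sets, bounded by symmetric difference
  have diff_bound : ∀ (f : G → ℂ) (C : ℝ), Measurable f → (∀ g, ‖f g‖ ≤ C) →
      ∀ (A B : Set G), MeasurableSet A → MeasurableSet B → μ A < ⊤ → μ B < ⊤ →
      ‖(∫ g in A, f g ∂μ) - ∫ g in B, f g ∂μ‖ ≤ C * (μ (A ∆ B)).toReal := by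
    intro f C hf hb A B hA hB hAfin hBfin
    have hC0 : 0 ≤ C := le_trans (norm_nonneg (f 1)) (hb 1)
    have hint : ∀ (s : Set G), μ s < ⊤ → IntegrableOn f s μ := hIntB f C hf hb
    have hd1 : Disjoint (A ∩ B) (A \ B) :=
      Set.disjoint_left.mpr fun g hg hgd => hgd.2 hg.2
    have hd2 : Disjoint (A ∩ B) (B \ A) :=
      Set.disjoint_left.mpr fun g hg hgd => hgd.2 hg.1
    have hd3 : Disjoint (A \ B) (B \ A) :=
      Set.disjoint_left.mpr fun g hg hgd => hg.2 hgd.1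
    have hABfin : μ (A \ B) < ⊤ := lt_of_le_of_lt (measure_mono Set.diff_subset) hAfin
    have hBAfin : μ (B \ A) < ⊤ := lt_of_le_of_lt (measure_mono Set.diff_subset) hBfin
    have hIABfin : μ (A ∩ B) < ⊤ := lt_of_le_of_lt (measure_mono Set.inter_subset_left) hAfin
    have hsplitA : (∫ g in A, f g ∂μ)
        = (∫ g in A ∩ B, f g ∂μ) + ∫ g in A \ B, f g ∂μ := by
      rw [← setIntegral_union hd1 (hA.diff hB) (hint _ hIABfin) (hint _ hABfin),
        Set.inter_union_diff]
    have hsplitB : (∫ g in B, f g ∂μ)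
        = (∫ g in A ∩ B, f g ∂μ) + ∫ g in B \ A, f g ∂μ := by
      rw [← setIntegral_union hd2 (hB.diff hA) (hint _ hIABfin) (hint _ hBAfin)]
      rw [Set.inter_comm, Set.inter_union_diff]
    have hmuSD : (μ (A ∆ B)).toReal = (μ (A \ B)).toReal + (μ (B \ A)).toReal := by
      rw [Set.symmDiff_def, measure_union hd3 (hB.diff hA),
        ENNReal.toReal_add hABfin.ne hBAfin.ne]
    calc ‖(∫ g in A, f g ∂μ) - ∫ g in B, f g ∂μ‖
        = ‖(∫ g in A \ B, f g ∂μ) - ∫ g in B \ A, f g ∂μ‖ := by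
          rw [hsplitA, hsplitB]; ring_nf
      _ ≤ ‖∫ g in A \ B, f g ∂μ‖ + ‖∫ g in B \ A, f g ∂μ‖ := norm_sub_le _ _
      _ ≤ C * (μ (A \ B)).toReal + C * (μ (B \ A)).toReal := by
          gcongr
          · exact norm_setIntegral_le_of_norm_le_const hABfin (fun g _ => hb g)
          · exact norm_setIntegral_le_of_norm_le_const hBAfin (fun g _ => hb g)
      _ = C * (μ (A ∆ B)).toReal := by rw [hmuSD]; ring
  -- change of variables by right translation
  have hCOV : ∀ (f : G → ℂ) (s : Set G) (g₀ : G),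
      ∫ g in (fun u => u * g₀) '' s, f g ∂μ = ∫ g in s, f (g * g₀) ∂μ := by
    intro f s g₀
    have hemb : MeasurableEmbedding (fun g : G => g * g₀) :=
      (MeasurableEquiv.mulRight g₀).measurableEmbedding
    have hmap : Measure.map (fun g : G => g * g₀) μ = μ :=
      map_mul_right_eq_self μ g₀
    have hpre : (fun g : G => g * g₀) ⁻¹' ((fun u => u * g₀) '' s) = s :=
      Set.preimage_image_eq s (fun a b hab => by simpa using mul_right_cancel hab)
    calc ∫ g in (fun u => u * g₀) '' s, f g ∂μ
        = ∫ g in (fun u => u * g₀) '' s, f g ∂(Measure.map (fun g : G => g * g₀) μ) := by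
          rw [hmap]
      _ = ∫ g in (fun g : G => g * g₀) ⁻¹' ((fun u => u * g₀) '' s), f (g * g₀) ∂μ :=
          hemb.setIntegral_map f _
      _ = ∫ g in s, f (g * g₀) ∂μ := by rw [hpre]
  -- image sets: measurability and measure invariance
  have himg_eq : ∀ (s : Set G) (g₀ : G),
      (fun u => u * g₀) '' s = (fun u => u * g₀⁻¹) ⁻¹' s := by
    intro s g₀
    ext a
    constructor
    · rintro ⟨b, hb, rfl⟩; simpa [mul_assoc] using hb
    · intro ha; exact ⟨a * g₀⁻¹, ha, by simp [mul_assoc]⟩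
  have himg_meas : ∀ (s : Set G), MeasurableSet s → ∀ g₀ : G,
      MeasurableSet ((fun u => u * g₀) '' s) := by
    intro s hs g₀
    rw [himg_eq]
    exact hs.preimage (measurable_mul_const g₀⁻¹)
  have himg_measure : ∀ (s : Set G) (g₀ : G), μ ((fun u => u * g₀) '' s) = μ s := by
    intro s g₀
    rw [himg_eq]
    exact measure_preimage_mul_right μ g₀⁻¹ s
  -- the set of differences
  set S : Set H := {v | ∃ g ∈ K, ∃ w : H, v = U g w - w} with hS_def
  -- z lies in the closure of the span of S
  have hzN : z ∈ closure ((Submodule.span ℂ S : Submodule ℂ H) : Set H) := by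
    set M : Submodule ℂ H := (Submodule.span ℂ S).topologicalClosure with hM_def
    haveI : CompleteSpace M :=
      (Submodule.isClosed_topologicalClosure (Submodule.span ℂ S)).completeSpace_coe
    set u : H := z - (M.orthogonalProjectionOnto z : H) with hu_def
    have hu_orth : u ∈ Mᗮ := Submodule.sub_starProjection_mem_orthogonal (K := M) z
    have hufix : ∀ g ∈ K, U g u = u := by
      intro g hg
      have hadj : ContinuousLinearMap.adjoint (U g) u = u := by
        have h1 : ∀ w : H, ⟪ContinuousLinearMap.adjoint (U g) u - u, w⟫ = 0 := by
          intro w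
          have hSmem : U g w - w ∈ M := by
            apply Submodule.le_topologicalClosure
            exact Submodule.subset_span ⟨g, hg, w, rfl⟩
          have horth : ⟪U g w - w, u⟫ = 0 :=
            (Submodule.mem_orthogonal M u).mp hu_orth _ hSmem
          have horth' : ⟪u, U g w - w⟫ = 0 := by
            rw [← inner_conj_symm, horth, map_zero]
          rw [inner_sub_left, ContinuousLinearMap.adjoint_inner_left]
          rw [← inner_sub_right]
          exact horth'
        have h2 := h1 (ContinuousLinearMap.adjoint (U g) u - u)
        rw [inner_self_eq_zero] at h2
        exact sub_eq_zero.mp h2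
      exact fixed_of_adjoint_fixed' (U g) (hUcontr g hg) u hadj
    have h1 : ⟪z, u⟫ = 0 := hPorth y u hufix
    have h2 : ⟪(M.orthogonalProjectionOnto z : H), u⟫ = 0 :=
      (Submodule.mem_orthogonal M u).mp hu_orth _ (M.orthogonalProjectionOnto z).2
    have h3 : ⟪u, u⟫ = 0 := by
      rw [hu_def, inner_sub_left, h1, h2, sub_zero]
    have hu0 : u = 0 := inner_self_eq_zero.mp h3
    have hzM : z ∈ M := by
      have : z = (M.orthogonalProjectionOnto z : H) := by
        have := sub_eq_zero.mp hu0
        simpa [hu_def] using this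
      rw [this]
      exact (M.orthogonalProjectionOnto z).2
    have : (M : Set H) = closure ((Submodule.span ℂ S : Submodule ℂ H) : Set H) :=
      Submodule.topologicalClosure_coe _
    rw [← this]
    exact hzM
  -- the key estimate for elements of the span
  have Qspan : ∀ s ∈ Submodule.span ℂ S, ∀ δ : ℝ, 0 < δ →
      ∀ᶠ α in atTop, ∀ u : H, ‖∫ g in Λ α, E s u g ∂μ‖ ≤ δ * (μ (Λ α)).toReal * ‖u‖ := by
    intro s hs
    induction hs using Submodule.span_induction with
    | mem v hv =>
      obtain ⟨g₀, hg₀, w, rfl⟩ := hv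
      intro δ hδ
      have hδ' : 0 < δ / (‖w‖ + 1) := by positivity
      have hev : ∀ᶠ α in atTop,
          (μ ((Λ α) ∆ ((fun u => u * g₀) '' (Λ α)))).toReal / (μ (Λ α)).toReal
            < δ / (‖w‖ + 1) :=
        (hFolner g₀ hg₀).eventually_lt_const hδ'
      filter_upwards [hev, hΛpos] with α hratio hpos
      intro u
      set A : Set G := (fun u => u * g₀) '' (Λ α) with hA_def
      have hμA : μ A = μ (Λ α) := himg_measure _ _
      have hAmeas : MeasurableSet A := himg_meas _ (hΛmeas α) g₀
      have hAfin : μ A < ⊤ := by rw [hμA]; exact hΛfin α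
      have hpt : ∀ g ∈ Λ α, E (U g₀ w - w) u g = E w u (g * g₀) - E w u g := by
        intro g hg
        have hgK : g ∈ K := hΛK α hg
        have hgg₀ : g * g₀ ∈ K := hKmul g hgK g₀ hg₀
        rw [hEeq _ _ _ hgK, hEeq _ _ _ hgg₀, hEeq _ _ _ hgK, map_sub, inner_sub_left,
          hUmul g hgK g₀ hg₀ w]
      have hIs : (∫ g in Λ α, E (U g₀ w - w) u g ∂μ)
          = (∫ g in A, E w u g ∂μ) - ∫ g in Λ α, E w u g ∂μ := by
        rw [setIntegral_congr_fun (hΛmeas α) hpt,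
          integral_sub
            (hIntB (fun g => E w u (g * g₀)) (‖w‖ * ‖u‖)
              ((hEmeas w u).comp (measurable_mul_const g₀))
              (fun g => hEbound w u _) _ (hΛfin α))
            (hInt w u α),
          hCOV (E w u) (Λ α) g₀]
      rw [hIs]
      have hdb := diff_bound (E w u) (‖w‖ * ‖u‖) (hEmeas w u) (hEbound w u)
        A (Λ α) hAmeas (hΛmeas α) hAfin (hΛfin α)
      have hpos' : 0 < (μ (Λ α)).toReal := ENNReal.toReal_pos hpos.ne' (hΛfin α).ne
      have hratio' : (μ ((Λ α) ∆ A)).toReal ≤ δ / (‖w‖ + 1) * (μ (Λ α)).toReal := by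
        rw [div_lt_iff₀ hpos'] at hratio
        exact hratio.le
      have hkey : ‖w‖ * (δ / (‖w‖ + 1)) ≤ δ := by
        have h01 : ‖w‖ / (‖w‖ + 1) ≤ 1 := by
          rw [div_le_one (by positivity)]; linarith [norm_nonneg w]
        calc ‖w‖ * (δ / (‖w‖ + 1)) = δ * (‖w‖ / (‖w‖ + 1)) := by ring
          _ ≤ δ * 1 := by nlinarith
          _ = δ := mul_one δ
      calc ‖(∫ g in A, E w u g ∂μ) - ∫ g in Λ α, E w u g ∂μ‖
          ≤ (‖w‖ * ‖u‖) * (μ (A ∆ Λ α)).toReal := hdb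
        _ = (‖w‖ * ‖u‖) * (μ ((Λ α) ∆ A)).toReal := by rw [symmDiff_comm]
        _ ≤ (‖w‖ * ‖u‖) * (δ / (‖w‖ + 1) * (μ (Λ α)).toReal) := by
            have h0 : 0 ≤ ‖w‖ * ‖u‖ := by positivity
            exact mul_le_mul_of_nonneg_left hratio' h0
        _ ≤ δ * (μ (Λ α)).toReal * ‖u‖ := by
            nlinarith [mul_le_mul_of_nonneg_right hkey
              (mul_nonneg (norm_nonneg u) hpos'.le)]
    | zero =>
      intro δ hδ
      filter_upwards [] with α
      intro u
      have hpt : ∀ g ∈ Λ α, E (0 : H) u g = (0 : ℂ) := fun g hg => by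
        rw [hEeq _ _ _ (hΛK α hg), map_zero, inner_zero_left]
      rw [setIntegral_congr_fun (hΛmeas α) hpt, integral_zero, norm_zero]
      positivity
    | add v w hv hw ihv ihw =>
      intro δ hδ
      filter_upwards [ihv (δ / 2) (by positivity), ihw (δ / 2) (by positivity)]
        with α h1 h2
      intro u
      have hpt : ∀ g ∈ Λ α, E (v + w) u g = E v u g + E w u g := fun g hg => by
        have hgK := hΛK α hg
        rw [hEeq _ _ _ hgK, hEeq _ _ _ hgK, hEeq _ _ _ hgK, map_add, inner_add_left]
      rw [setIntegral_congr_fun (hΛmeas α) hpt, integral_add (hInt v u α) (hInt w u α)]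
      calc ‖(∫ g in Λ α, E v u g ∂μ) + ∫ g in Λ α, E w u g ∂μ‖
          ≤ ‖∫ g in Λ α, E v u g ∂μ‖ + ‖∫ g in Λ α, E w u g ∂μ‖ := norm_add_le _ _
        _ ≤ δ / 2 * (μ (Λ α)).toReal * ‖u‖ + δ / 2 * (μ (Λ α)).toReal * ‖u‖ :=
            add_le_add (h1 u) (h2 u)
        _ = δ * (μ (Λ α)).toReal * ‖u‖ := by ring
    | smul c v hv ihv =>
      intro δ hδ
      have hc : 0 < δ / (‖c‖ + 1) := by positivity
      filter_upwards [ihv (δ / (‖c‖ + 1)) hc] with α h1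
      intro u
      have hpt : ∀ g ∈ Λ α, E (c • v) u g = (starRingEnd ℂ) c * E v u g := fun g hg => by
        have hgK := hΛK α hg
        rw [hEeq _ _ _ hgK, hEeq _ _ _ hgK, (U g).map_smul, inner_smul_left]
      rw [setIntegral_congr_fun (hΛmeas α) hpt, integral_const_mul, norm_mul,
        RCLike.norm_conj]
      have hkey : ‖c‖ * (δ / (‖c‖ + 1)) ≤ δ := by
        have h01 : ‖c‖ / (‖c‖ + 1) ≤ 1 := by
          rw [div_le_one (by positivity)]; linarith [norm_nonneg c]
        calc ‖c‖ * (δ / (‖c‖ + 1)) = δ * (‖c‖ / (‖c‖ + 1)) := by ring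
          _ ≤ δ * 1 := by nlinarith
          _ = δ := mul_one δ
      have h2 := h1 u
      have h3 := mul_le_mul_of_nonneg_left h2 (norm_nonneg c)
      have h4 := mul_le_mul_of_nonneg_right hkey
        (mul_nonneg ENNReal.toReal_nonneg (norm_nonneg u) :
          (0:ℝ) ≤ (μ (Λ α)).toReal * ‖u‖)
      nlinarith
  -- the key estimate for z
  have keyQ : ∀ δ : ℝ, 0 < δ →
      ∀ᶠ α in atTop, ∀ u : H, ‖∫ g in Λ α, E z u g ∂μ‖ ≤ δ * (μ (Λ α)).toReal * ‖u‖ := by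
    intro δ hδ
    have hhalf : 0 < δ / 2 := by positivity
    obtain ⟨s, hsmem, hsclose⟩ : ∃ s ∈ Submodule.span ℂ S, ‖z - s‖ ≤ δ / 2 := by
      rcases Metric.mem_closure_iff.mp hzN (δ / 2) hhalf with ⟨s, hs, hd⟩
      exact ⟨s, hs, by rw [dist_eq_norm] at hd; exact hd.le⟩
    filter_upwards [Qspan s hsmem (δ / 2) hhalf] with α h1
    intro u
    have hpt : ∀ g ∈ Λ α, E z u g = E (z - s) u g + E s u g := fun g hg => by
      have hgK := hΛK α hg
      rw [hEeq _ _ _ hgK, hEeq _ _ _ hgK, hEeq _ _ _ hgK, ← inner_add_left, ← map_add,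
        sub_add_cancel]
    rw [setIntegral_congr_fun (hΛmeas α) hpt, integral_add (hInt (z - s) u α) (hInt s u α)]
    have hb1 : ‖∫ g in Λ α, E (z - s) u g ∂μ‖ ≤ (‖z - s‖ * ‖u‖) * (μ (Λ α)).toReal :=
      norm_setIntegral_le_of_norm_le_const (hΛfin α) (fun g _ => hEbound _ _ g)
    have hμ0 : (0:ℝ) ≤ (μ (Λ α)).toReal := ENNReal.toReal_nonneg
    calc ‖(∫ g in Λ α, E (z - s) u g ∂μ) + ∫ g in Λ α, E s u g ∂μ‖
        ≤ ‖∫ g in Λ α, E (z - s) u g ∂μ‖ + ‖∫ g in Λ α, E s u g ∂μ‖ := norm_add_le _ _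
      _ ≤ (‖z - s‖ * ‖u‖) * (μ (Λ α)).toReal + δ / 2 * (μ (Λ α)).toReal * ‖u‖ :=
          add_le_add hb1 (h1 u)
      _ ≤ δ * (μ (Λ α)).toReal * ‖u‖ := by
          nlinarith [mul_le_mul_of_nonneg_right hsclose
            (mul_nonneg (norm_nonneg u) hμ0)]
  -- conclusion
  set c : ℝ := ‖⟪x, P y⟫‖ with hc_def
  set δ : ℝ := ε / (2 * (‖x‖ + 1)) with hδ_def
  have hδpos : 0 < δ := by positivity
  obtain ⟨α₀, hα₀, hpos₀⟩ := ((keyQ δ hδpos).and hΛpos).exists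
  refine ⟨α₀, ?_⟩
  intro h hh
  by_contra hcon
  push_neg at hcon
  have hne : (Λ α₀).Nonempty := nonempty_of_measure_ne_zero hpos₀.ne'
  have hbd : ∀ g ∈ Λ α₀, ‖⟪x, U (g * h) y⟫‖ ≤ c - ε := fun g hg =>
    hcon _ ⟨g, hg, rfl⟩
  set u : H := ContinuousLinearMap.adjoint (U h) x with hu_def
  have hu_norm : ‖u‖ ≤ ‖x‖ := by
    have hadj_norm : ‖ContinuousLinearMap.adjoint (U h)‖ = ‖U h‖ :=
      (ContinuousLinearMap.adjoint :
        (H →L[ℂ] H) ≃ₗᵢ⋆[ℂ] (H →L[ℂ] H)).norm_map (U h)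
    calc ‖u‖ ≤ ‖ContinuousLinearMap.adjoint (U h)‖ * ‖x‖ :=
          (ContinuousLinearMap.adjoint (U h)).le_opNorm x
      _ = ‖U h‖ * ‖x‖ := by rw [hadj_norm]
      _ ≤ 1 * ‖x‖ := mul_le_mul_of_nonneg_right (hUcontr h hh) (norm_nonneg x)
      _ = ‖x‖ := one_mul _
  have hμt : 0 < (μ (Λ α₀)).toReal := ENNReal.toReal_pos hpos₀.ne' (hΛfin α₀).ne
  have hptw : ∀ g ∈ Λ α₀, ⟪x, U (g * h) y⟫ = ⟪x, P y⟫ + (starRingEnd ℂ) (E z u g) := by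
    intro g hg
    have hgK : g ∈ K := hΛK α₀ hg
    have hgh : g * h ∈ K := hKmul g hgK h hh
    have hy : y = P y + z := by rw [hz_def]; abel
    calc ⟪x, U (g * h) y⟫ = ⟪x, U (g * h) (P y + z)⟫ := by rw [← hy]
      _ = ⟪x, U (g * h) (P y) + U (g * h) z⟫ := by rw [map_add]
      _ = ⟪x, P y + U h (U g z)⟫ := by
          rw [hPfix y (g * h) hgh, hKab g hgK h hh, hUmul h hh g hgK z]
      _ = ⟪x, P y⟫ + ⟪x, U h (U g z)⟫ := inner_add_right _ _ _
      _ = ⟪x, P y⟫ + (starRingEnd ℂ) (E z u g) := by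
          rw [hEeq z u g hgK, hu_def, ContinuousLinearMap.adjoint_inner_right,
            inner_conj_symm]
  set F : G → ℂ := fun g => ⟪x, P y⟫ + (starRingEnd ℂ) (E z u g) with hF_def
  have hconj_meas : Measurable fun g => (starRingEnd ℂ) (E z u g) :=
    continuous_star.measurable.comp (hEmeas z u)
  have hconj_int : IntegrableOn (fun g => (starRingEnd ℂ) (E z u g)) (Λ α₀) μ :=
    hIntB _ (‖z‖ * ‖u‖) hconj_meas
      (fun g => by rw [RCLike.norm_conj]; exact hEbound z u g) _ (hΛfin α₀)
  have hFmeas : Measurable F := measurable_const.add hconj_meas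
  have hconst_int : IntegrableOn (fun _ : G => ⟪x, P y⟫) (Λ α₀) μ :=
    integrableOn_const (hΛfin α₀).ne
  have hIeq : (∫ g in Λ α₀, F g ∂μ)
      = (μ (Λ α₀)).toReal • ⟪x, P y⟫
        + (starRingEnd ℂ) (∫ g in Λ α₀, E z u g ∂μ) := by
    rw [hF_def, integral_add hconst_int hconj_int, setIntegral_const, integral_conj]; rfl
  have hsmall : ‖∫ g in Λ α₀, E z u g ∂μ‖ ≤ ε / 2 * (μ (Λ α₀)).toReal := by
    have h1 := hα₀ u
    have h2 : δ * ‖u‖ ≤ ε / 2 := by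
      rw [hδ_def]
      calc ε / (2 * (‖x‖ + 1)) * ‖u‖
          ≤ ε / (2 * (‖x‖ + 1)) * (‖x‖ + 1) := by
            have hle : ‖u‖ ≤ ‖x‖ + 1 := hu_norm.trans (by linarith)
            have h0 : (0:ℝ) ≤ ε / (2 * (‖x‖ + 1)) := by positivity
            exact mul_le_mul_of_nonneg_left hle h0
        _ = ε / 2 := by
            have hx1 : (‖x‖ + 1) ≠ 0 := by positivity
            field_simp
    calc ‖∫ g in Λ α₀, E z u g ∂μ‖ ≤ δ * (μ (Λ α₀)).toReal * ‖u‖ := h1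
      _ = (δ * ‖u‖) * (μ (Λ α₀)).toReal := by ring
      _ ≤ ε / 2 * (μ (Λ α₀)).toReal :=
          mul_le_mul_of_nonneg_right h2 ENNReal.toReal_nonneg
  have hlow : (c - ε / 2) * (μ (Λ α₀)).toReal ≤ ‖∫ g in Λ α₀, F g ∂μ‖ := by
    have hA : ‖(μ (Λ α₀)).toReal • ⟪x, P y⟫‖ = (μ (Λ α₀)).toReal * c := by
      rw [norm_smul, Real.norm_eq_abs, abs_of_nonneg ENNReal.toReal_nonneg]
    have hB : ‖(starRingEnd ℂ) (∫ g in Λ α₀, E z u g ∂μ)‖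
        ≤ ε / 2 * (μ (Λ α₀)).toReal := by
      rw [RCLike.norm_conj]; exact hsmall
    have norm_add_lower : ∀ A B : ℂ, ‖A‖ - ‖B‖ ≤ ‖A + B‖ := by
      intro A B
      have hnl := norm_sub_norm_le A (-B)
      rwa [norm_neg, sub_neg_eq_add] at hnl
    have htri : ‖(μ (Λ α₀)).toReal • ⟪x, P y⟫‖
        - ‖(starRingEnd ℂ) (∫ g in Λ α₀, E z u g ∂μ)‖
        ≤ ‖∫ g in Λ α₀, F g ∂μ‖ := by
      rw [hIeq]
      exact norm_add_lower _ _
    have hstep : (c - ε / 2) * (μ (Λ α₀)).toReal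
        ≤ ‖(μ (Λ α₀)).toReal • ⟪x, P y⟫‖
          - ‖(starRingEnd ℂ) (∫ g in Λ α₀, E z u g ∂μ)‖ := by
      rw [hA]
      linarith [hB]
    exact le_trans hstep htri
  have hup : ‖∫ g in Λ α₀, F g ∂μ‖ ≤ (c - ε) * (μ (Λ α₀)).toReal := by
    have hptnorm : ∀ g ∈ Λ α₀, ‖F g‖ ≤ c - ε := by
      intro g hg
      have : F g = ⟪x, U (g * h) y⟫ := (hptw g hg).symm
      rw [this]
      exact hbd g hg
    exact norm_setIntegral_le_of_norm_le_const (hΛfin α₀) hptnorm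
  have hfinal := le_trans hlow hup
  have hcontra : c - ε / 2 ≤ c - ε := le_of_mul_le_mul_right hfinal hμt
  linarith
end

section
/- Unimodular Khintchine recurrence: In the setting of the mean ergodic theorem but with the group G unimodular (its right Haar measure is also left-invariant) and K not necessarily abelian, for any x, y ∈ H and ε > 0 there exists α₀ such that |(1/μ(Λ_{α₀})) ∫_{hΛ_{α₀}} ⟨x, U_g y⟩ dg| > |⟨x, P y⟩| − ε for all h ∈ K. -/
open MeasureTheory Filter
open scoped symmDiff

local notation "⟪" x ", " y "⟫" => @inner ℂ _ _ x y

section Aux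

variable {G : Type*} [Group G] [MeasurableSpace G] [MeasurableMul G]
  {H : Type*} [NormedAddCommGroup H] [InnerProductSpace ℂ H]
  {μ : Measure G} {K : Set G}
  {U : G → H →L[ℂ] H}

lemma aux_bound (hUcontr : ∀ g ∈ K, ‖U g‖ ≤ 1) (z v : H) {u : G} (hu : u ∈ K) :
    ‖⟪z, U u v⟫‖ ≤ ‖z‖ * ‖v‖ := by
  calc ‖⟪z, U u v⟫‖ ≤ ‖z‖ * ‖U u v‖ := norm_inner_le_norm _ _
    _ ≤ ‖z‖ * ‖v‖ := by
        refine mul_le_mul_of_nonneg_left ?_ (norm_nonneg z)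
        exact ((U u).le_opNorm v).trans
          (mul_le_of_le_one_left (norm_nonneg v) (hUcontr u hu))

lemma aux_aesm_s6 (hKmeas : MeasurableSet K)
    (hUmeas : ∀ x y : H, Measurable fun g : K => ⟪U (g : G) x, y⟫)
    (z v : H) {s : Set G} (hs : MeasurableSet s) (hsK : s ⊆ K) :
    AEStronglyMeasurable (fun u => ⟪z, U u v⟫) (μ.restrict s) := by
  set F : G → ℂ := Function.extend ((↑) : K → G) (fun g : K => ⟪z, U (g : G) v⟫) 0 with hF
  have hmK : Measurable fun g : K => ⟪z, U (g : G) v⟫ := by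
    have : (fun g : K => ⟪z, U (g : G) v⟫)
        = fun g : K => starRingEnd ℂ ⟪U (g : G) v, z⟫ := by
      funext g; rw [inner_conj_symm]
    rw [this]
    exact (Complex.continuous_conj.measurable).comp (hUmeas v z)
  have hmF : Measurable F :=
    (MeasurableEmbedding.subtype_coe hKmeas).measurable_extend hmK measurable_const
  have heq : ∀ u ∈ s, F u = ⟪z, U u v⟫ := by
    intro u hu
    have huK : u ∈ K := hsK hu
    have : F ((⟨u, huK⟩ : K) : G) = ⟪z, U ((⟨u, huK⟩ : K) : G) v⟫ :=
      Subtype.coe_injective.extend_apply _ _ _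
    simpa using this
  refine (hmF.aestronglyMeasurable.restrict).congr ?_
  filter_upwards [ae_restrict_mem hs] with u hu using heq u hu

lemma aux_integrableOn (hKmeas : MeasurableSet K)
    (hUcontr : ∀ g ∈ K, ‖U g‖ ≤ 1)
    (hUmeas : ∀ x y : H, Measurable fun g : K => ⟪U (g : G) x, y⟫)
    (z v : H) {s : Set G} (hs : MeasurableSet s) (hsK : s ⊆ K) (hfin : μ s < ⊤) :
    IntegrableOn (fun u => ⟪z, U u v⟫) s μ := by
  refine Integrable.mono' (g := fun _ => ‖z‖ * ‖v‖)
    (integrableOn_const hfin.ne)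
    (aux_aesm_s6 hKmeas hUmeas z v hs hsK) ?_
  filter_upwards [ae_restrict_mem hs] with u hu using aux_bound hUcontr z v (hsK hu)

lemma aux_norm_int (hKmeas : MeasurableSet K)
    (hUcontr : ∀ g ∈ K, ‖U g‖ ≤ 1)
    (hUmeas : ∀ x y : H, Measurable fun g : K => ⟪U (g : G) x, y⟫)
    (z v : H) {s : Set G} (hs : MeasurableSet s) (hsK : s ⊆ K) (hfin : μ s < ⊤) :
    ‖∫ u in s, ⟪z, U u v⟫ ∂μ‖ ≤ ‖z‖ * ‖v‖ * (μ s).toReal :=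
  norm_setIntegral_le_of_norm_le_const hfin
    (fun u hu => aux_bound hUcontr z v (hsK hu))

lemma aux_folner [μ.IsMulRightInvariant] (hKmeas : MeasurableSet K)
    (hKmul : ∀ g ∈ K, ∀ h ∈ K, g * h ∈ K)
    (hUcontr : ∀ g ∈ K, ‖U g‖ ≤ 1)
    (hUmul : ∀ g ∈ K, ∀ h ∈ K, ∀ x : H, U g (U h x) = U (g * h) x)
    (hUmeas : ∀ x y : H, Measurable fun g : K => ⟪U (g : G) x, y⟫)
    (z v : H) {g : G} (hg : g ∈ K)
    {s : Set G} (hs : MeasurableSet s) (hsK : s ⊆ K) (hfin : μ s < ⊤) :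
    ‖∫ u in s, ⟪z, U u (v - U g v)⟫ ∂μ‖
      ≤ ‖z‖ * ‖v‖ * (μ (s ∆ ((fun u => u * g) '' s))).toReal := by
  set t : Set G := (fun u => u * g) '' s with ht_def
  have hemb : MeasurableEmbedding (fun u : G => u * g) :=
    (MeasurableEquiv.mulRight g).measurableEmbedding
  have hmp : MeasurePreserving (fun u : G => u * g) μ μ := measurePreserving_mul_right μ g
  have ht : MeasurableSet t := hemb.measurableSet_image.2 hs
  have htK : t ⊆ K := by
    rintro _ ⟨u, hu, rfl⟩
    exact hKmul u (hsK hu) g hg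
  have hμt : μ t = μ s := by
    rw [ht_def, ← hmp.map_eq, hemb.map_apply, Set.preimage_image_eq s hemb.injective,
      hmp.map_eq]
  have htfin : μ t < ⊤ := hμt ▸ hfin
  have hint_s : IntegrableOn (fun u => ⟪z, U u v⟫) s μ :=
    aux_integrableOn hKmeas hUcontr hUmeas z v hs hsK hfin
  have hint_t : IntegrableOn (fun u => ⟪z, U u v⟫) t μ :=
    aux_integrableOn hKmeas hUcontr hUmeas z v ht htK htfin
  have hint_comp : IntegrableOn (fun u => ⟪z, U (u * g) v⟫) s μ := by
    have := ((hmp.restrict_image_emb hemb s).integrable_comp_emb hemb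
      (g := fun u => ⟪z, U u v⟫)).2 hint_t
    exact this
  -- rewrite the integrand on s
  have hcongr : ∫ u in s, ⟪z, U u (v - U g v)⟫ ∂μ
      = ∫ u in s, (⟪z, U u v⟫ - ⟪z, U (u * g) v⟫) ∂μ := by
    refine setIntegral_congr_fun hs ?_
    intro u hu
    have huK : u ∈ K := hsK hu
    simp only [map_sub, inner_sub_right, hUmul u huK g hg v]
  have hchange : ∫ u in s, ⟪z, U (u * g) v⟫ ∂μ = ∫ u in t, ⟪z, U u v⟫ ∂μ := by
    rw [ht_def, hmp.setIntegral_image_emb hemb]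
  have hsub : ∫ u in s, ⟪z, U u (v - U g v)⟫ ∂μ
      = (∫ u in s, ⟪z, U u v⟫ ∂μ) - ∫ u in t, ⟪z, U u v⟫ ∂μ := by
    rw [hcongr, integral_sub hint_s hint_comp, hchange]
  -- split into the symmetric difference
  have hsplit_s : (∫ u in s ∩ t, ⟪z, U u v⟫ ∂μ) + ∫ u in s \ t, ⟪z, U u v⟫ ∂μ
      = ∫ u in s, ⟪z, U u v⟫ ∂μ := integral_inter_add_diff ht hint_s
  have hsplit_t : (∫ u in t ∩ s, ⟪z, U u v⟫ ∂μ) + ∫ u in t \ s, ⟪z, U u v⟫ ∂μ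
      = ∫ u in t, ⟪z, U u v⟫ ∂μ := integral_inter_add_diff hs hint_t
  have hdiff : ∫ u in s, ⟪z, U u (v - U g v)⟫ ∂μ
      = (∫ u in s \ t, ⟪z, U u v⟫ ∂μ) - ∫ u in t \ s, ⟪z, U u v⟫ ∂μ := by
    rw [hsub, ← hsplit_s, ← hsplit_t, Set.inter_comm t s]
    ring
  have hb1 : ‖∫ u in s \ t, ⟪z, U u v⟫ ∂μ‖ ≤ ‖z‖ * ‖v‖ * (μ (s \ t)).toReal :=
    aux_norm_int hKmeas hUcontr hUmeas z v (hs.diff ht)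
      ((Set.diff_subset).trans hsK) (lt_of_le_of_lt (measure_mono Set.diff_subset) hfin)
  have hb2 : ‖∫ u in t \ s, ⟪z, U u v⟫ ∂μ‖ ≤ ‖z‖ * ‖v‖ * (μ (t \ s)).toReal :=
    aux_norm_int hKmeas hUcontr hUmeas z v (ht.diff hs)
      ((Set.diff_subset).trans htK) (lt_of_le_of_lt (measure_mono Set.diff_subset) htfin)
  have hmeas_symm : μ (s ∆ t) = μ (s \ t) + μ (t \ s) := by
    rw [Set.symmDiff_def]
    exact measure_union (disjoint_sdiff_sdiff) (ht.diff hs)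
  have h1fin : μ (s \ t) ≠ ⊤ :=
    (lt_of_le_of_lt (measure_mono Set.diff_subset) hfin).ne
  have h2fin : μ (t \ s) ≠ ⊤ :=
    (lt_of_le_of_lt (measure_mono Set.diff_subset) htfin).ne
  have htoReal : (μ (s ∆ t)).toReal = (μ (s \ t)).toReal + (μ (t \ s)).toReal := by
    rw [hmeas_symm, ENNReal.toReal_add h1fin h2fin]
  calc ‖∫ u in s, ⟪z, U u (v - U g v)⟫ ∂μ‖
      ≤ ‖∫ u in s \ t, ⟪z, U u v⟫ ∂μ‖ + ‖∫ u in t \ s, ⟪z, U u v⟫ ∂μ‖ := by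
        rw [hdiff]; exact norm_sub_le _ _
    _ ≤ ‖z‖ * ‖v‖ * (μ (s \ t)).toReal + ‖z‖ * ‖v‖ * (μ (t \ s)).toReal :=
        add_le_add hb1 hb2
    _ = ‖z‖ * ‖v‖ * (μ (s ∆ t)).toReal := by rw [htoReal]; ring

lemma aux_span [μ.IsMulRightInvariant] (hKmeas : MeasurableSet K)
    (hKmul : ∀ g ∈ K, ∀ h ∈ K, g * h ∈ K)
    (hUcontr : ∀ g ∈ K, ‖U g‖ ≤ 1)
    (hUmul : ∀ g ∈ K, ∀ h ∈ K, ∀ x : H, U g (U h x) = U (g * h) x)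
    (hUmeas : ∀ x y : H, Measurable fun g : K => ⟪U (g : G) x, y⟫)
    {ι : Type*} [Nonempty ι] [Preorder ι] [IsDirected ι (· ≤ ·)]
    (Λ : ι → Set G) (hΛK : ∀ α, Λ α ⊆ K) (hΛmeas : ∀ α, MeasurableSet (Λ α))
    (hΛfin : ∀ α, μ (Λ α) < ⊤)
    (hFolner : ∀ g ∈ K,
      Tendsto (fun α => (μ ((Λ α) ∆ ((fun u => u * g) '' (Λ α)))).toReal / (μ (Λ α)).toReal)
        atTop (nhds 0))
    {w : H} (hw : w ∈ Submodule.span ℂ {u : H | ∃ g ∈ K, ∃ v : H, u = v - U g v}) :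
    ∃ c : ι → ℝ, (∀ α, 0 ≤ c α) ∧
      (∀ α (z : H), ‖∫ u in Λ α, ⟪z, U u w⟫ ∂μ‖ ≤ ‖z‖ * c α) ∧
      Tendsto (fun α => c α / (μ (Λ α)).toReal) atTop (nhds 0) := by
  induction hw using Submodule.span_induction with
  | mem u hu =>
    obtain ⟨g, hg, v, rfl⟩ := hu
    refine ⟨fun α => ‖v‖ * (μ ((Λ α) ∆ ((fun u => u * g) '' (Λ α)))).toReal,
      fun α => mul_nonneg (norm_nonneg v) ENNReal.toReal_nonneg, fun α z => ?_, ?_⟩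
    · have := aux_folner hKmeas hKmul hUcontr hUmul hUmeas z v hg
        (hΛmeas α) (hΛK α) (hΛfin α)
      calc ‖∫ u in Λ α, ⟪z, U u (v - U g v)⟫ ∂μ‖
          ≤ ‖z‖ * ‖v‖ * (μ ((Λ α) ∆ ((fun u => u * g) '' (Λ α)))).toReal := this
        _ = ‖z‖ * (‖v‖ * (μ ((Λ α) ∆ ((fun u => u * g) '' (Λ α)))).toReal) := by ring
    · have := (hFolner g hg).const_mul ‖v‖
      simpa [mul_div_assoc] using this
  | zero =>
    refine ⟨fun _ => 0, fun _ => le_refl 0, fun α z => ?_, by simpa using tendsto_const_nhds⟩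
    simp
  | add u₁ u₂ h₁ h₂ ih₁ ih₂ =>
    obtain ⟨c₁, hc₁0, hc₁, hc₁t⟩ := ih₁
    obtain ⟨c₂, hc₂0, hc₂, hc₂t⟩ := ih₂
    refine ⟨fun α => c₁ α + c₂ α, fun α => add_nonneg (hc₁0 α) (hc₂0 α), fun α z => ?_, ?_⟩
    · have hcongr : ∫ u in Λ α, ⟪z, U u (u₁ + u₂)⟫ ∂μ
          = (∫ u in Λ α, ⟪z, U u u₁⟫ ∂μ) + ∫ u in Λ α, ⟪z, U u u₂⟫ ∂μ := by
        rw [← integral_add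
          (aux_integrableOn hKmeas hUcontr hUmeas z u₁ (hΛmeas α) (hΛK α) (hΛfin α))
          (aux_integrableOn hKmeas hUcontr hUmeas z u₂ (hΛmeas α) (hΛK α) (hΛfin α))]
        congr 1
        funext u
        simp [inner_add_right]
      rw [hcongr]
      calc ‖(∫ u in Λ α, ⟪z, U u u₁⟫ ∂μ) + ∫ u in Λ α, ⟪z, U u u₂⟫ ∂μ‖
          ≤ ‖∫ u in Λ α, ⟪z, U u u₁⟫ ∂μ‖ + ‖∫ u in Λ α, ⟪z, U u u₂⟫ ∂μ‖ := norm_add_le _ _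
        _ ≤ ‖z‖ * c₁ α + ‖z‖ * c₂ α := add_le_add (hc₁ α z) (hc₂ α z)
        _ = ‖z‖ * (c₁ α + c₂ α) := by ring
    · have := hc₁t.add hc₂t
      simpa [add_div] using this
  | smul a u hu ih =>
    obtain ⟨c, hc0, hc, hct⟩ := ih
    refine ⟨fun α => ‖a‖ * c α, fun α => mul_nonneg (norm_nonneg a) (hc0 α),
      fun α z => ?_, ?_⟩
    · have hcongr : ∫ u' in Λ α, ⟪z, U u' (a • u)⟫ ∂μ
          = a • ∫ u' in Λ α, ⟪z, U u' u⟫ ∂μ := by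
        rw [← integral_smul]
        congr 1
        funext u'
        simp [inner_smul_right]
      rw [hcongr]
      calc ‖a • ∫ u' in Λ α, ⟪z, U u' u⟫ ∂μ‖ = ‖a‖ * ‖∫ u' in Λ α, ⟪z, U u' u⟫ ∂μ‖ :=
            norm_smul a _
        _ ≤ ‖a‖ * (‖z‖ * c α) :=
            mul_le_mul_of_nonneg_left (hc α z) (norm_nonneg a)
        _ = ‖z‖ * (‖a‖ * c α) := by ring
    · have := hct.const_mul ‖a‖
      simpa [mul_div_assoc] using this

end Aux

/-- **Unimodular Khintchine recurrence.** With `G` unimodular (the Haar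
measure `μ` is both left and right invariant) and `K` not necessarily abelian, for any
`x, y` and `ε > 0` there is `α₀` such that the average of `⟨x, U_g y⟩` over every left
translate `h Λ_{α₀}`, `h ∈ K`, exceeds `|⟨x, P y⟩| − ε` in modulus. -/
theorem hilbert_khintchine_recurrence_unimodular
    {G : Type*} [Group G] [TopologicalSpace G] [IsTopologicalGroup G]
    [LocallyCompactSpace G] [T2Space G] [MeasurableSpace G] [BorelSpace G]
    (μ : Measure G) [μ.IsMulRightInvariant] [μ.IsMulLeftInvariant] [IsFiniteMeasureOnCompacts μ]
    [μ.IsOpenPosMeasure]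
    (K : Set G) (hKmeas : MeasurableSet K)
    (hKmul : ∀ g ∈ K, ∀ h ∈ K, g * h ∈ K)
    {H : Type*} [NormedAddCommGroup H] [InnerProductSpace ℂ H] [CompleteSpace H]
    (U : G → H →L[ℂ] H)
    (hUcontr : ∀ g ∈ K, ‖U g‖ ≤ 1)
    (hUmul : ∀ g ∈ K, ∀ h ∈ K, ∀ x : H, U g (U h x) = U (g * h) x)
    (hUmeas : ∀ x y : H, Measurable fun g : K => ⟪U (g : G) x, y⟫)
    (P : H →L[ℂ] H)
    (hPfix : ∀ x : H, ∀ g ∈ K, U g (P x) = P x)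
    (hPorth : ∀ x v : H, (∀ g ∈ K, U g v = v) → ⟪x - P x, v⟫ = 0)
    {ι : Type*} [Nonempty ι] [Preorder ι] [IsDirected ι (· ≤ ·)]
    (Λ : ι → Set G) (hΛK : ∀ α, Λ α ⊆ K) (hΛmeas : ∀ α, MeasurableSet (Λ α))
    (hΛfin : ∀ α, μ (Λ α) < ⊤)
    (hΛpos : ∀ᶠ α in atTop, 0 < μ (Λ α))
    (hFolner : ∀ g ∈ K,
      Tendsto (fun α => (μ ((Λ α) ∆ ((fun u => u * g) '' (Λ α)))).toReal / (μ (Λ α)).toReal)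
        atTop (nhds 0))
    (x y : H) (ε : ℝ) (hε : 0 < ε) :
    ∃ α₀ : ι, ∀ h ∈ K,
      ‖(μ (Λ α₀)).toReal⁻¹ • ∫ g in (fun u => h * u) '' (Λ α₀), ⟪x, U g y⟫ ∂μ‖ >
        ‖⟪x, P y⟫‖ - ε := by
  classical
  set S : Set H := {u : H | ∃ g ∈ K, ∃ v : H, u = v - U g v} with hS_def
  set w : H := y - P y with hw_def
  -- w lies in the closure of the span of S
  have hworth : w ∈ ((Submodule.span ℂ S)ᗮ)ᗮ := by
    rw [Submodule.mem_orthogonal]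
    intro z hz
    have hzspan : ∀ u ∈ Submodule.span ℂ S, ⟪u, z⟫ = 0 :=
      (Submodule.mem_orthogonal _ z).1 hz
    have hfix : ∀ g ∈ K, U g z = z := by
      intro g hg
      have hadj : ContinuousLinearMap.adjoint (U g) z = z := by
        apply ext_inner_left ℂ
        intro v
        rw [ContinuousLinearMap.adjoint_inner_right]
        have h0 : ⟪v - U g v, z⟫ = 0 :=
          hzspan _ (Submodule.subset_span ⟨g, hg, v, rfl⟩)
        rw [inner_sub_left, sub_eq_zero] at h0
        exact h0.symm
      have hinner : ⟪U g z, z⟫ = ⟪z, z⟫ := by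
        rw [← ContinuousLinearMap.adjoint_inner_right, hadj]
      have hle : ‖U g z‖ ≤ ‖z‖ :=
        ((U g).le_opNorm z).trans (mul_le_of_le_one_left (norm_nonneg z) (hUcontr g hg))
      have hsq : ‖U g z - z‖ ^ 2 ≤ 0 := by
        have hns := @norm_sub_sq ℂ _ _ _ _ (U g z) z
        rw [hinner, inner_self_eq_norm_sq] at hns
        nlinarith [norm_nonneg (U g z), norm_nonneg z]
      have : ‖U g z - z‖ = 0 := by nlinarith [norm_nonneg (U g z - z)]
      rwa [norm_eq_zero, sub_eq_zero] at this
    have h0 : ⟪y - P y, z⟫ = 0 := hPorth y z hfix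
    rw [← inner_conj_symm, hw_def, h0, map_zero]
  have hwcl : w ∈ closure ((Submodule.span ℂ S : Submodule ℂ H) : Set H) := by
    rw [Submodule.orthogonal_orthogonal_eq_closure] at hworth
    rw [← Submodule.topologicalClosure_coe]
    exact hworth
  -- choose an approximant in the span
  set δ : ℝ := ε / (4 * (‖x‖ + 1)) with hδ_def
  have hδpos : 0 < δ := by
    apply div_pos hε
    nlinarith [norm_nonneg x]
  obtain ⟨s, hsmem, hsd⟩ : ∃ s ∈ Submodule.span ℂ S, ‖w - s‖ < δ := by
    rw [Metric.mem_closure_iff] at hwcl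
    obtain ⟨s, hs1, hs2⟩ := hwcl (δ) hδpos
    exact ⟨s, hs1, by rwa [dist_eq_norm] at hs2⟩
  obtain ⟨c, hc0, hc, hct⟩ := aux_span hKmeas hKmul hUcontr hUmul hUmeas
    Λ hΛK hΛmeas hΛfin hFolner hsmem
  have hev1 : ∀ᶠ α in atTop, c α / (μ (Λ α)).toReal < δ :=
    hct.eventually_lt_const hδpos
  obtain ⟨α₀, hpos, hsmall⟩ := (hΛpos.and hev1).exists
  refine ⟨α₀, fun h hh => ?_⟩
  set m : ℝ := (μ (Λ α₀)).toReal with hm_def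
  have hmpos : 0 < m := ENNReal.toReal_pos hpos.ne' (hΛfin α₀).ne
  set z : H := ContinuousLinearMap.adjoint (U h) x with hz_def
  have hznorm : ‖z‖ ≤ ‖x‖ := by
    have h1 : ‖ContinuousLinearMap.adjoint (U h)‖ = ‖U h‖ :=
      ContinuousLinearMap.adjoint.norm_map (U h)
    calc ‖z‖ ≤ ‖ContinuousLinearMap.adjoint (U h)‖ * ‖x‖ :=
          (ContinuousLinearMap.adjoint (U h)).le_opNorm x
      _ = ‖U h‖ * ‖x‖ := by rw [h1]
      _ ≤ 1 * ‖x‖ := mul_le_mul_of_nonneg_right (hUcontr h hh) (norm_nonneg x)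
      _ = ‖x‖ := one_mul _
  -- Step 1: change variables
  have hstep1 : ∫ g in (fun u => h * u) '' (Λ α₀), ⟪x, U g y⟫ ∂μ
      = ∫ u in Λ α₀, ⟪x, U (h * u) y⟫ ∂μ :=
    (measurePreserving_mul_left μ h).setIntegral_image_emb
      (MeasurableEquiv.mulLeft h).measurableEmbedding _ _
  -- Step 2: decompose the integrand
  have hptwise : ∀ u ∈ Λ α₀, ⟪x, U (h * u) y⟫ = ⟪x, P y⟫ + ⟪z, U u w⟫ := by
    intro u hu
    have huK : u ∈ K := hΛK α₀ hu
    have h1 : U (h * u) y = U h (U u y) := (hUmul h hh u huK y).symm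
    have h2 : U u y = P y + U u w := by
      have : y = P y + w := by rw [hw_def]; abel
      calc U u y = U u (P y + w) := by rw [← this]
        _ = U u (P y) + U u w := map_add _ _ _
        _ = P y + U u w := by rw [hPfix y u huK]
    rw [h1, ← ContinuousLinearMap.adjoint_inner_left, ← hz_def, h2, inner_add_right]
    congr 1
    rw [hz_def, ContinuousLinearMap.adjoint_inner_left, hPfix y h hh]
  have hintw : IntegrableOn (fun u => ⟪z, U u w⟫) (Λ α₀) μ :=
    aux_integrableOn hKmeas hUcontr hUmeas z w (hΛmeas α₀) (hΛK α₀) (hΛfin α₀)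
  have hstep2 : ∫ u in Λ α₀, ⟪x, U (h * u) y⟫ ∂μ
      = m • ⟪x, P y⟫ + ∫ u in Λ α₀, ⟪z, U u w⟫ ∂μ := by
    rw [setIntegral_congr_fun (hΛmeas α₀) hptwise,
      integral_add (integrableOn_const (C := ⟪x, P y⟫) (hΛfin α₀).ne) hintw, setIntegral_const, Measure.real]
  -- bound on the remainder
  set R : ℂ := ∫ u in Λ α₀, ⟪z, U u w⟫ ∂μ with hR_def
  have hRbound : ‖R‖ < (ε / 2) * m := by
    have hconv : R = (∫ u in Λ α₀, ⟪z, U u (w - s)⟫ ∂μ) + ∫ u in Λ α₀, ⟪z, U u s⟫ ∂μ := by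
      rw [hR_def, ← integral_add
        (aux_integrableOn hKmeas hUcontr hUmeas z (w - s) (hΛmeas α₀) (hΛK α₀) (hΛfin α₀))
        (aux_integrableOn hKmeas hUcontr hUmeas z s (hΛmeas α₀) (hΛK α₀) (hΛfin α₀))]
      congr 1
      funext u
      simp [inner_sub_right, inner_add_right, map_sub]
    have hb1 : ‖∫ u in Λ α₀, ⟪z, U u (w - s)⟫ ∂μ‖ ≤ ‖z‖ * ‖w - s‖ * m :=
      aux_norm_int hKmeas hUcontr hUmeas z (w - s) (hΛmeas α₀) (hΛK α₀) (hΛfin α₀)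
    have hb2 : ‖∫ u in Λ α₀, ⟪z, U u s⟫ ∂μ‖ ≤ ‖z‖ * c α₀ := hc α₀ z
    have hcα : c α₀ < δ * m := by
      have := hsmall
      rw [div_lt_iff₀ hmpos] at this
      linarith
    have hx1 : ‖z‖ * ‖w - s‖ * m ≤ ‖x‖ * δ * m := by
      have : ‖z‖ * ‖w - s‖ ≤ ‖x‖ * δ :=
        mul_le_mul hznorm hsd.le (norm_nonneg _) (norm_nonneg x)
      nlinarith
    have hx2 : ‖z‖ * c α₀ ≤ ‖x‖ * (δ * m) := by
      have h1 : ‖z‖ * c α₀ ≤ ‖x‖ * c α₀ :=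
        mul_le_mul_of_nonneg_right hznorm (hc0 α₀)
      have h2 : ‖x‖ * c α₀ ≤ ‖x‖ * (δ * m) :=
        mul_le_mul_of_nonneg_left hcα.le (norm_nonneg x)
      linarith
    have hfinal : ‖x‖ * δ * m + ‖x‖ * (δ * m) < (ε / 2) * m := by
      have hxd : ‖x‖ * δ < ε / 4 := by
        have h4 : (0:ℝ) < 4 * (‖x‖ + 1) := by nlinarith [norm_nonneg x]
        rw [hδ_def, ← mul_div_assoc, div_lt_div_iff₀ h4 (by norm_num : (0:ℝ) < 4)]
        nlinarith [norm_nonneg x]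
      nlinarith
    calc ‖R‖ ≤ ‖∫ u in Λ α₀, ⟪z, U u (w - s)⟫ ∂μ‖ + ‖∫ u in Λ α₀, ⟪z, U u s⟫ ∂μ‖ := by
          rw [hconv]; exact norm_add_le _ _
      _ ≤ ‖x‖ * δ * m + ‖x‖ * (δ * m) := add_le_add (hb1.trans hx1) (hb2.trans hx2)
      _ < (ε / 2) * m := hfinal
  -- final computation
  have hsmul : (μ (Λ α₀)).toReal⁻¹ • ∫ g in (fun u => h * u) '' (Λ α₀), ⟪x, U g y⟫ ∂μ
      = ⟪x, P y⟫ + m⁻¹ • R := by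
    rw [hstep1, hstep2, smul_add, smul_smul,
      inv_mul_cancel₀ hmpos.ne', one_smul]
  rw [hsmul]
  have hRsmall : ‖m⁻¹ • R‖ < ε := by
    rw [norm_smul, norm_inv, Real.norm_of_nonneg hmpos.le]
    calc m⁻¹ * ‖R‖ < m⁻¹ * ((ε / 2) * m) := by
          exact mul_lt_mul_of_pos_left hRbound (inv_pos.2 hmpos)
      _ = ε / 2 := by field_simp
      _ < ε := by linarith
  have htri : ‖⟪x, P y⟫‖ - ‖m⁻¹ • R‖ ≤ ‖⟪x, P y⟫ + m⁻¹ • R‖ := by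
    have := norm_add_le (⟪x, P y⟫ + m⁻¹ • R) (-(m⁻¹ • R))
    simp only [add_neg_cancel_right, norm_neg] at this
    linarith
  linarith
end

section
/- Characterization of ergodicity: Let (A, ω, τ, K) be a *-dynamical system, {Λ_α} a space-filling net in K, U the GNS representation of τ on H with cyclic vector Ω, and P the projection onto the common fixed space of the U_g. Then lim_α (1/μ(Λ_α)) ∫_{Λ_α} ω(A τ_g(B)) dg = ω(A)ω(B) holds for all A, B ∈ A if and only if P = Ω ⊗ Ω (i.e. P x = ⟨Ω, x⟩ Ω, i.e. P has one-dimensional range). In particular, ergodicity is independent of the choice of space-filling net. -/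
open MeasureTheory Filter
open scoped ComplexOrder symmDiff

local notation "⟪" x ", " y "⟫" => @inner ℂ _ _ x y

lemma aux_meas_indicator {G : Type*} [MeasurableSpace G] {K : Set G} (hK : MeasurableSet K)
    {f : G → ℂ} (hf : Measurable fun g : K => f g) : Measurable (K.indicator f) := by
  have h := (MeasurableEmbedding.subtype_coe hK).measurable_extend hf
    (measurable_const (a := (0:ℂ)))
  convert h using 1
  funext g
  by_cases hg : g ∈ K
  · have : Function.extend (Subtype.val : K → G) (fun g : K => f g) (fun _ => 0) g
        = f (⟨g, hg⟩ : K) := by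
      have := (MeasurableEmbedding.subtype_coe hK).injective.extend_apply
        (fun g : K => f g) (fun _ => (0:ℂ)) ⟨g, hg⟩
      simpa using this
    simp [Set.indicator_of_mem hg, this]
  · rw [Set.indicator_of_notMem hg, Function.extend_apply']
    rintro ⟨a, rfl⟩
    exact hg a.2

lemma aux_integrableOn_s13 {G : Type*} [MeasurableSpace G] {μ : Measure G} {K S : Set G}
    (hK : MeasurableSet K) (hS : MeasurableSet S) (hSK : S ⊆ K) (hfin : μ S ≠ ⊤)
    {f : G → ℂ} (hf : Measurable fun g : K => f g) {C : ℝ} (hC : ∀ g ∈ K, ‖f g‖ ≤ C) :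
    IntegrableOn f S μ := by
  have hind : Measurable (K.indicator f) := aux_meas_indicator hK hf
  have h1 : IntegrableOn (K.indicator f) S μ := by
    apply Measure.integrableOn_of_bounded hfin hind.aestronglyMeasurable (M := max C 0)
    filter_upwards with g
    by_cases hg : g ∈ K
    · rw [Set.indicator_of_mem hg]; exact le_max_of_le_left (hC g hg)
    · rw [Set.indicator_of_notMem hg]; simp
  exact h1.congr_fun (fun g hg => Set.indicator_of_mem (hSK hg) f) hS

lemma aux_fixed {H : Type*} [NormedAddCommGroup H] [InnerProductSpace ℂ H] [CompleteSpace H]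
    (T : H →L[ℂ] H) (hT : ‖T‖ ≤ 1) (z : H) (hz : ContinuousLinearMap.adjoint T z = z) :
    T z = z := by
  have h1 : (⟪z, T z⟫ : ℂ) = (‖z‖ : ℂ) ^ 2 := by
    rw [← ContinuousLinearMap.adjoint_inner_left, hz, inner_self_eq_norm_sq_to_K]
    norm_cast
  have h2 : RCLike.re (⟪T z, z⟫ : ℂ) = ‖z‖ ^ 2 := by
    rw [← inner_conj_symm, h1]
    norm_cast
  have h3 : ‖T z‖ ≤ ‖z‖ := by
    calc ‖T z‖ ≤ ‖T‖ * ‖z‖ := T.le_opNorm z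
    _ ≤ 1 * ‖z‖ := mul_le_mul_of_nonneg_right hT (norm_nonneg z)
    _ = ‖z‖ := one_mul _
  have h4 : ‖T z - z‖ ^ 2 ≤ 0 := by
    rw [norm_sub_sq (𝕜 := ℂ), h2]
    nlinarith [norm_nonneg (T z), norm_nonneg z]
  have h5 : ‖T z - z‖ = 0 := by nlinarith [norm_nonneg (T z - z)]
  rwa [norm_eq_zero, sub_eq_zero] at h5

lemma weak_MET
    {G : Type*} [Group G] [MeasurableSpace G] [MeasurableMul G]
    (μ : Measure G) [μ.IsMulRightInvariant]
    (K : Set G) (hKmeas : MeasurableSet K)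
    (hKmul : ∀ g ∈ K, ∀ h ∈ K, g * h ∈ K)
    {H : Type*} [NormedAddCommGroup H] [InnerProductSpace ℂ H] [CompleteSpace H]
    (U : G → H →L[ℂ] H) (hUcontr : ∀ g ∈ K, ‖U g‖ ≤ 1)
    (hUmul : ∀ g ∈ K, ∀ h ∈ K, ∀ v : H, U g (U h v) = U (g * h) v)
    (hUmeas : ∀ x y : H, Measurable fun g : K => (⟪x, U (g : G) y⟫ : ℂ))
    (P : H →L[ℂ] H)
    (hPfix : ∀ x : H, ∀ g ∈ K, U g (P x) = P x)
    (hPorth : ∀ x v : H, (∀ g ∈ K, U g v = v) → ⟪x - P x, v⟫ = 0)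
    {ι' : Type*} [Nonempty ι'] [Preorder ι'] [IsDirected ι' (· ≤ ·)]
    (Λ : ι' → Set G) (hΛK : ∀ α, Λ α ⊆ K) (hΛmeas : ∀ α, MeasurableSet (Λ α))
    (hΛfin : ∀ α, μ (Λ α) < ⊤)
    (hΛpos : ∀ᶠ α in atTop, 0 < μ (Λ α))
    (hFolner : ∀ g ∈ K,
      Tendsto (fun α => (μ ((Λ α) ∆ ((fun u => u * g) '' (Λ α)))).toReal / (μ (Λ α)).toReal)
        atTop (nhds 0))
    (x y : H) :
    Tendsto (fun α => (μ (Λ α)).toReal⁻¹ • ∫ g in Λ α, (⟪x, U g y⟫ : ℂ) ∂μ)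
      atTop (nhds ⟪x, P y⟫) := by
  -- uniform bound on the integrand
  have hbound : ∀ v : H, ∀ g ∈ K, ‖(⟪x, U g v⟫ : ℂ)‖ ≤ ‖x‖ * ‖v‖ := by
    intro v g hg
    have h1 : ‖U g v‖ ≤ ‖v‖ := by
      calc ‖U g v‖ ≤ ‖U g‖ * ‖v‖ := (U g).le_opNorm v
      _ ≤ 1 * ‖v‖ := mul_le_mul_of_nonneg_right (hUcontr g hg) (norm_nonneg v)
      _ = ‖v‖ := one_mul _
    calc ‖(⟪x, U g v⟫ : ℂ)‖ ≤ ‖x‖ * ‖U g v‖ := norm_inner_le_norm x _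
    _ ≤ ‖x‖ * ‖v‖ := by gcongr
  have hIntOn : ∀ (v : H) (S : Set G), MeasurableSet S → S ⊆ K → μ S < ⊤ →
      IntegrableOn (fun g => (⟪x, U g v⟫ : ℂ)) S μ := fun v S hS hSK hfin =>
    aux_integrableOn_s13 hKmeas hS hSK hfin.ne (hUmeas x v) (hbound v)
  have hev : ∀ᶠ α in atTop, 0 < (μ (Λ α)).toReal := by
    filter_upwards [hΛpos] with α hα
    exact ENNReal.toReal_pos hα.ne' (hΛfin α).ne
  -- the fixed-space-complement part lies in the closure of the span of coboundaries
  set S : Set H := {z | ∃ h ∈ K, ∃ v : H, z = U h v - v} with hSdef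
  set W : Submodule ℂ H := Submodule.span ℂ S with hWdef
  have hwcl : y - P y ∈ closure (W : Set H) := by
    have hmem : y - P y ∈ Wᗮᗮ := by
      rw [Submodule.mem_orthogonal]
      intro u hu
      have hufix : ∀ h ∈ K, U h u = u := by
        intro h hh
        apply aux_fixed (U h) (hUcontr h hh)
        apply ext_inner_left ℂ
        intro v
        have h0 : (⟪U h v - v, u⟫ : ℂ) = 0 :=
          (Submodule.mem_orthogonal W u).1 hu _ (Submodule.subset_span ⟨h, hh, v, rfl⟩)
        rw [inner_sub_left, sub_eq_zero] at h0
        rw [ContinuousLinearMap.adjoint_inner_right]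
        exact h0
      have h1 := hPorth y u hufix
      exact inner_eq_zero_symm.mp h1
    rw [Submodule.orthogonal_orthogonal_eq_closure] at hmem
    rwa [← Submodule.topologicalClosure_coe]
  -- convergence to zero for coboundaries
  have hgen : ∀ h ∈ K, ∀ v : H,
      Tendsto (fun α => (μ (Λ α)).toReal⁻¹ • ∫ g in Λ α, (⟪x, U g (U h v - v)⟫ : ℂ) ∂μ)
        atTop (nhds 0) := by
    intro h hh v
    set f : G → ℂ := fun g => ⟪x, U g v⟫ with hfdef
    set C := ‖x‖ * ‖v‖ with hCdef
    apply squeeze_zero_norm'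
      (a := fun α => C * ((μ ((Λ α) ∆ ((fun u => u * h) '' (Λ α)))).toReal / (μ (Λ α)).toReal))
    · filter_upwards [hev] with α hα
      set T : Set G := (fun u => u * h) '' (Λ α) with hTdef
      have hTpre : T = (fun u => u * h⁻¹) ⁻¹' (Λ α) := by
        ext u
        constructor
        · rintro ⟨w, hw, rfl⟩; simpa using hw
        · intro hu; exact ⟨u * h⁻¹, hu, by simp⟩
      have hTmeas : MeasurableSet T := hTpre ▸ (hΛmeas α).preimage (measurable_mul_const h⁻¹)
      have hTK : T ⊆ K := by
        rintro u ⟨w, hw, rfl⟩; exact hKmul w (hΛK α hw) h hh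
      have hTμ : μ T = μ (Λ α) := by
        rw [hTpre]; exact measure_preimage_mul_right μ h⁻¹ _
      have hInt1 : IntegrableOn (fun g => f (g * h)) (Λ α) μ :=
        (hIntOn (U h v) _ (hΛmeas α) (hΛK α) (hΛfin α)).congr_fun
          (fun g hg => by simp only [hfdef]; rw [hUmul g (hΛK α hg) h hh]) (hΛmeas α)
      have hInt2 : IntegrableOn f (Λ α) μ := hIntOn v _ (hΛmeas α) (hΛK α) (hΛfin α)
      have hIntT : IntegrableOn f T μ :=
        hIntOn v T hTmeas hTK (by rw [hTμ]; exact hΛfin α)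
      have e1 : ∫ g in Λ α, (⟪x, U g (U h v - v)⟫ : ℂ) ∂μ
          = (∫ g in Λ α, f (g * h) ∂μ) - ∫ g in Λ α, f g ∂μ := by
        rw [← integral_sub hInt1 hInt2]
        apply setIntegral_congr_fun (hΛmeas α)
        intro g hg
        simp only [hfdef]
        rw [map_sub, inner_sub_right, hUmul g (hΛK α hg) h hh]
      have e2 : ∫ g in Λ α, f (g * h) ∂μ = ∫ g in T, f g ∂μ := by
        rw [← integral_indicator (hΛmeas α), ← integral_indicator hTmeas,
          ← integral_mul_right_eq_self (fun g => T.indicator f g) h]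
        congr 1
        funext g
        by_cases hg : g ∈ Λ α
        · rw [Set.indicator_of_mem hg, Set.indicator_of_mem (Set.mem_image_of_mem _ hg)]
        · rw [Set.indicator_of_notMem hg, Set.indicator_of_notMem]
          rintro ⟨w, hw, hwe⟩
          have : w = g := mul_right_cancel hwe
          exact hg (this ▸ hw)
      have hsd : MeasurableSet ((Λ α) ∆ T) := (hΛmeas α).symmDiff hTmeas
      have hsdfin : μ ((Λ α) ∆ T) < ⊤ := by
        calc μ ((Λ α) ∆ T) ≤ μ ((Λ α) ∪ T) := measure_mono Set.symmDiff_subset_union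
        _ ≤ μ (Λ α) + μ T := measure_union_le _ _
        _ < ⊤ := by rw [hTμ]; exact ENNReal.add_lt_top.2 ⟨hΛfin α, hΛfin α⟩
      have e3 : ‖(∫ g in T, f g ∂μ) - ∫ g in Λ α, f g ∂μ‖ ≤ C * (μ ((Λ α) ∆ T)).toReal := by
        have hiT : Integrable (T.indicator f) μ := (integrable_indicator_iff hTmeas).2 hIntT
        have hiΛ : Integrable ((Λ α).indicator f) μ := (integrable_indicator_iff (hΛmeas α)).2 hInt2
        rw [← integral_indicator hTmeas, ← integral_indicator (hΛmeas α), ← integral_sub hiT hiΛ]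
        have hCnn : 0 ≤ C := by positivity
        calc ‖∫ g, (T.indicator f g - (Λ α).indicator f g) ∂μ‖
            ≤ ∫ g, ‖T.indicator f g - (Λ α).indicator f g‖ ∂μ := norm_integral_le_integral_norm _
          _ ≤ ∫ g, ((Λ α) ∆ T).indicator (fun _ => C) g ∂μ := by
              apply integral_mono (hiT.sub hiΛ).norm
                ((integrable_indicator_iff hsd).2 (integrableOn_const hsdfin.ne))
              intro g
              simp only [Pi.sub_apply]
              by_cases h1 : g ∈ T <;> by_cases h2 : g ∈ Λ α
              · rw [Set.indicator_of_mem h1, Set.indicator_of_mem h2,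
                  Set.indicator_of_notMem (by simp [Set.mem_symmDiff, h1, h2]), sub_self,
                  norm_zero]
              · rw [Set.indicator_of_mem h1, Set.indicator_of_notMem h2,
                  Set.indicator_of_mem (by simp [Set.mem_symmDiff, h1, h2]), sub_zero]
                exact hbound v g (hTK h1)
              · rw [Set.indicator_of_notMem h1, Set.indicator_of_mem h2,
                  Set.indicator_of_mem (by simp [Set.mem_symmDiff, h1, h2]), zero_sub, norm_neg]
                exact hbound v g (hΛK α h2)
              · rw [Set.indicator_of_notMem h1, Set.indicator_of_notMem h2,
                  Set.indicator_of_notMem (by simp [Set.mem_symmDiff, h1, h2]), sub_self,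
                  norm_zero]
          _ = C * (μ ((Λ α) ∆ T)).toReal := by
              rw [integral_indicator hsd, setIntegral_const, smul_eq_mul, mul_comm]; rfl
      rw [e1, e2, norm_smul, Real.norm_of_nonneg (inv_nonneg.2 hα.le)]
      calc (μ (Λ α)).toReal⁻¹ * ‖(∫ g in T, f g ∂μ) - ∫ g in Λ α, f g ∂μ‖
          ≤ (μ (Λ α)).toReal⁻¹ * (C * (μ ((Λ α) ∆ T)).toReal) :=
            mul_le_mul_of_nonneg_left e3 (inv_nonneg.2 hα.le)
        _ = C * ((μ ((Λ α) ∆ T)).toReal / (μ (Λ α)).toReal) := by ring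
    · have := (hFolner h hh).const_mul C
      simpa using this
  -- convergence to zero on the span
  have hspan : ∀ w ∈ W,
      Tendsto (fun α => (μ (Λ α)).toReal⁻¹ • ∫ g in Λ α, (⟪x, U g w⟫ : ℂ) ∂μ)
        atTop (nhds 0) := by
    intro w hw
    induction hw using Submodule.span_induction with
    | mem z hz =>
        obtain ⟨h, hh, v, rfl⟩ := hz
        exact hgen h hh v
    | zero =>
        simp only [map_zero, inner_zero_right, integral_zero, smul_zero]
        exact tendsto_const_nhds
    | add w1 w2 hw1 hw2 ih1 ih2 =>
        have key : ∀ α, (μ (Λ α)).toReal⁻¹ • ∫ g in Λ α, (⟪x, U g (w1 + w2)⟫ : ℂ) ∂μ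
            = ((μ (Λ α)).toReal⁻¹ • ∫ g in Λ α, (⟪x, U g w1⟫ : ℂ) ∂μ)
              + (μ (Λ α)).toReal⁻¹ • ∫ g in Λ α, (⟪x, U g w2⟫ : ℂ) ∂μ := by
          intro α
          rw [← smul_add, ← integral_add (hIntOn w1 _ (hΛmeas α) (hΛK α) (hΛfin α))
            (hIntOn w2 _ (hΛmeas α) (hΛK α) (hΛfin α))]
          congr 1
          apply setIntegral_congr_fun (hΛmeas α)
          intro g _
          show (⟪x, U g (w1 + w2)⟫ : ℂ) = ⟪x, U g w1⟫ + ⟪x, U g w2⟫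
          rw [map_add, inner_add_right]
        have h0 := ih1.add ih2
        rw [add_zero] at h0
        exact Tendsto.congr (fun α => (key α).symm) h0
    | smul a w hw ih =>
        have key : ∀ α, (μ (Λ α)).toReal⁻¹ • ∫ g in Λ α, (⟪x, U g (a • w)⟫ : ℂ) ∂μ
            = a • ((μ (Λ α)).toReal⁻¹ • ∫ g in Λ α, (⟪x, U g w⟫ : ℂ) ∂μ) := by
          intro α
          rw [smul_comm]
          congr 1
          rw [← integral_smul]
          apply setIntegral_congr_fun (hΛmeas α)
          intro g _
          show (⟪x, U g (a • w)⟫ : ℂ) = a • (⟪x, U g w⟫ : ℂ)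
          rw [_root_.map_smul, inner_smul_right]
          rfl
        have h0 := ih.const_smul a
        rw [smul_zero] at h0
        exact Tendsto.congr (fun α => (key α).symm) h0
  -- the averaging functionals are uniformly bounded
  have hnorm_le : ∀ v : H, ∀ α, 0 < (μ (Λ α)).toReal →
      ‖(μ (Λ α)).toReal⁻¹ • ∫ g in Λ α, (⟪x, U g v⟫ : ℂ) ∂μ‖ ≤ ‖x‖ * ‖v‖ := by
    intro v α hα
    rw [norm_smul, Real.norm_of_nonneg (inv_nonneg.2 hα.le)]
    have hle : ‖∫ g in Λ α, (⟪x, U g v⟫ : ℂ) ∂μ‖ ≤ (‖x‖ * ‖v‖) * (μ (Λ α)).toReal :=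
      norm_setIntegral_le_of_norm_le_const (hΛfin α) (fun g hg => hbound v g (hΛK α hg))
    calc (μ (Λ α)).toReal⁻¹ * ‖∫ g in Λ α, (⟪x, U g v⟫ : ℂ) ∂μ‖
        ≤ (μ (Λ α)).toReal⁻¹ * ((‖x‖ * ‖v‖) * (μ (Λ α)).toReal) :=
          mul_le_mul_of_nonneg_left hle (inv_nonneg.2 hα.le)
      _ = ‖x‖ * ‖v‖ := by field_simp
  -- extend the convergence to the closure of the span
  have hcl : ∀ w ∈ closure (W : Set H),
      Tendsto (fun α => (μ (Λ α)).toReal⁻¹ • ∫ g in Λ α, (⟪x, U g w⟫ : ℂ) ∂μ)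
        atTop (nhds 0) := by
    intro w hwmem
    rw [Metric.tendsto_nhds]
    intro ε hε
    obtain ⟨w0, hw0W, hw0⟩ : ∃ w0 ∈ (W : Set H), ‖w - w0‖ < ε / (2 * (‖x‖ + 1)) := by
      obtain ⟨w0, hw0, hd⟩ := Metric.mem_closure_iff.1 hwmem (ε / (2 * (‖x‖ + 1)))
        (by positivity)
      exact ⟨w0, hw0, by rwa [dist_eq_norm] at hd⟩
    have h1 := hspan w0 hw0W
    rw [Metric.tendsto_nhds] at h1
    filter_upwards [h1 (ε / 2) (by positivity), hev] with α hα1 hα2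
    rw [dist_zero_right] at hα1 ⊢
    have key : (μ (Λ α)).toReal⁻¹ • ∫ g in Λ α, (⟪x, U g w⟫ : ℂ) ∂μ
        = ((μ (Λ α)).toReal⁻¹ • ∫ g in Λ α, (⟪x, U g (w - w0)⟫ : ℂ) ∂μ)
          + (μ (Λ α)).toReal⁻¹ • ∫ g in Λ α, (⟪x, U g w0⟫ : ℂ) ∂μ := by
      rw [← smul_add, ← integral_add (hIntOn (w - w0) _ (hΛmeas α) (hΛK α) (hΛfin α))
        (hIntOn w0 _ (hΛmeas α) (hΛK α) (hΛfin α))]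
      congr 1
      apply setIntegral_congr_fun (hΛmeas α)
      intro g _
      show (⟪x, U g w⟫ : ℂ) = ⟪x, U g (w - w0)⟫ + ⟪x, U g w0⟫
      rw [← inner_add_right, ← map_add, sub_add_cancel]
    rw [key]
    have hA : ‖(μ (Λ α)).toReal⁻¹ • ∫ g in Λ α, (⟪x, U g (w - w0)⟫ : ℂ) ∂μ‖ < ε / 2 := by
      have := hnorm_le (w - w0) α hα2
      have h2 : ‖x‖ * ‖w - w0‖ < ε / 2 := by
        have hxlt : ‖x‖ * ‖w - w0‖ ≤ ‖x‖ * (ε / (2 * (‖x‖ + 1))) :=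
          mul_le_mul_of_nonneg_left hw0.le (norm_nonneg x)
        have hpos : (0:ℝ) < ‖x‖ + 1 := by positivity
        have heq : ‖x‖ * (ε / (2 * (‖x‖ + 1))) = (‖x‖ / (‖x‖ + 1)) * (ε / 2) := by
          field_simp
        have hlt : ‖x‖ / (‖x‖ + 1) < 1 := (div_lt_one hpos).2 (by linarith [norm_nonneg x])
        have : (‖x‖ / (‖x‖ + 1)) * (ε / 2) < 1 * (ε / 2) :=
          mul_lt_mul_of_pos_right hlt (by positivity)
        rw [one_mul] at this
        linarith
      linarith
    calc ‖_ + _‖ ≤ ‖(μ (Λ α)).toReal⁻¹ • ∫ g in Λ α, (⟪x, U g (w - w0)⟫ : ℂ) ∂μ‖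
          + ‖(μ (Λ α)).toReal⁻¹ • ∫ g in Λ α, (⟪x, U g w0⟫ : ℂ) ∂μ‖ := norm_add_le _ _
      _ < ε / 2 + ε / 2 := add_lt_add hA hα1
      _ = ε := add_halves ε
  -- assemble
  have hPval : ∀ᶠ α in atTop, (μ (Λ α)).toReal⁻¹ • ∫ g in Λ α, (⟪x, U g y⟫ : ℂ) ∂μ
      = (⟪x, P y⟫ : ℂ)
        + (μ (Λ α)).toReal⁻¹ • ∫ g in Λ α, (⟪x, U g (y - P y)⟫ : ℂ) ∂μ := by
    filter_upwards [hev] with α hα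
    have split : ∫ g in Λ α, (⟪x, U g y⟫ : ℂ) ∂μ
        = (∫ g in Λ α, (⟪x, U g (P y)⟫ : ℂ) ∂μ)
          + ∫ g in Λ α, (⟪x, U g (y - P y)⟫ : ℂ) ∂μ := by
      rw [← integral_add (hIntOn (P y) _ (hΛmeas α) (hΛK α) (hΛfin α))
        (hIntOn (y - P y) _ (hΛmeas α) (hΛK α) (hΛfin α))]
      apply setIntegral_congr_fun (hΛmeas α)
      intro g _
      show (⟪x, U g y⟫ : ℂ) = ⟪x, U g (P y)⟫ + ⟪x, U g (y - P y)⟫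
      rw [← inner_add_right, ← map_add, add_sub_cancel]
    have hconst : ∫ g in Λ α, (⟪x, U g (P y)⟫ : ℂ) ∂μ
        = (μ (Λ α)).toReal • (⟪x, P y⟫ : ℂ) := by
      show _ = μ.real (Λ α) • (⟪x, P y⟫ : ℂ)
      rw [← setIntegral_const]
      apply setIntegral_congr_fun (hΛmeas α)
      intro g hg
      show (⟪x, U g (P y)⟫ : ℂ) = ⟪x, P y⟫
      rw [hPfix y g (hΛK α hg)]
    rw [split, hconst, smul_add, smul_smul, inv_mul_cancel₀ hα.ne', one_smul]
  have hfinal := (hcl (y - P y) hwcl).const_add (⟪x, P y⟫ : ℂ)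
  rw [add_zero] at hfinal
  exact Tendsto.congr' (Filter.EventuallyEq.symm hPval) hfinal

/-- **Characterization of ergodicity.** For a `*`-dynamical system
`(A, ω, τ, K)` with GNS representation `U` on `H`, cyclic vector `Ω = ι 1` and `P` the
orthogonal projection onto the common fixed space, and any space-filling net `Λ` in
`K`: the averages of `g ↦ ω(a τ_g b)` converge to `ω(a)ω(b)` for all `a, b` iff
`P = Ω ⊗ Ω`, i.e. `P x = ⟨Ω, x⟩ Ω` for all `x` (one-dimensional range). In particular
ergodicity does not depend on the chosen space-filling net. -/
theorem ergodicity_iff_projection_rank_one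
    {G : Type*} [Group G] [TopologicalSpace G] [IsTopologicalGroup G]
    [LocallyCompactSpace G] [T2Space G] [MeasurableSpace G] [BorelSpace G]
    (μ : Measure G) [μ.IsMulRightInvariant] [IsFiniteMeasureOnCompacts μ]
    [μ.IsOpenPosMeasure]
    (K : Set G) (hKmeas : MeasurableSet K)
    (hKmul : ∀ g ∈ K, ∀ h ∈ K, g * h ∈ K)
    {A : Type*} [Ring A] [Algebra ℂ A] [StarRing A] [StarModule ℂ A]
    (ω : A →ₗ[ℂ] ℂ) (hω1 : ω 1 = 1) (hωpos : ∀ a : A, 0 ≤ ω (star a * a))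
    (τ : G → A →ₗ[ℂ] A)
    (hτmul : ∀ g ∈ K, ∀ h ∈ K, ∀ a : A, τ g (τ h a) = τ (g * h) a)
    (hτ1 : ∀ g ∈ K, τ g 1 = 1)
    (hτcontr : ∀ g ∈ K, ∀ a : A, ω (star (τ g a) * τ g a) ≤ ω (star a * a))
    (hτmeas : ∀ a b : A, Measurable fun g : K => ω (star a * τ (g : G) b))
    -- the GNS representation
    {H : Type*} [NormedAddCommGroup H] [InnerProductSpace ℂ H] [CompleteSpace H]
    (ι : A →ₗ[ℂ] H) (hdense : DenseRange ι)
    (hinner : ∀ a b : A, ⟪ι a, ι b⟫ = ω (star a * b))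
    (Ω : H) (hΩ : Ω = ι 1)
    (U : G → H →L[ℂ] H)
    (hUcontr : ∀ g ∈ K, ‖U g‖ ≤ 1)
    (hUι : ∀ g ∈ K, ∀ a : A, U g (ι a) = ι (τ g a))
    -- `P` is the orthogonal projection onto the common fixed space of the `U_g`:
    (P : H →L[ℂ] H)
    (hPfix : ∀ x : H, ∀ g ∈ K, U g (P x) = P x)
    (hPorth : ∀ x v : H, (∀ g ∈ K, U g v = v) → ⟪x - P x, v⟫ = 0)
    -- a space-filling net `Λ` in `K`:
    {ι' : Type*} [Nonempty ι'] [Preorder ι'] [IsDirected ι' (· ≤ ·)]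
    (Λ : ι' → Set G) (hΛK : ∀ α, Λ α ⊆ K) (hΛmeas : ∀ α, MeasurableSet (Λ α))
    (hΛfin : ∀ α, μ (Λ α) < ⊤)
    (hΛpos : ∀ᶠ α in atTop, 0 < μ (Λ α))
    (hFolner : ∀ g ∈ K,
      Tendsto (fun α => (μ ((Λ α) ∆ ((fun u => u * g) '' (Λ α)))).toReal / (μ (Λ α)).toReal)
        atTop (nhds 0)) :
    (∀ a b : A,
      Tendsto (fun α => (μ (Λ α)).toReal⁻¹ • ∫ g in Λ α, ω (a * τ g b) ∂μ)
        atTop (nhds (ω a * ω b))) ↔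
    (∀ x : H, P x = ⟪Ω, x⟫ • Ω) := by
  haveI : (atTop : Filter ι').NeBot :=
    atTop_neBot_iff.2 ⟨‹Nonempty ι'›, ‹IsDirected ι' (· ≤ ·)›⟩
  -- multiplicativity of `U` on `K`
  have hUmul : ∀ g ∈ K, ∀ h ∈ K, ∀ v : H, U g (U h v) = U (g * h) v := by
    intro g hg h hh
    have hcomp : (⇑(U g) ∘ ⇑(U h)) ∘ ⇑ι = ⇑(U (g * h)) ∘ ⇑ι := by
      funext a
      simp only [Function.comp_apply]
      rw [hUι h hh a, hUι g hg (τ h a), hτmul g hg h hh a, hUι (g * h) (hKmul g hg h hh) a]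
    have heq := DenseRange.equalizer hdense ((U g).continuous.comp (U h).continuous)
      (U (g * h)).continuous hcomp
    intro v
    exact congrFun heq v
  -- measurability of matrix coefficients
  have hmeas1 : ∀ a b : A, Measurable fun g : K => (⟪ι a, U (g : G) (ι b)⟫ : ℂ) := by
    intro a b
    have he : (fun g : K => (⟪ι a, U (g : G) (ι b)⟫ : ℂ))
        = fun g : K => ω (star a * τ (g : G) b) := by
      funext g
      rw [hUι g g.2 b, hinner]
    rw [he]
    exact hτmeas a b
  have hmeas2 : ∀ (x : H) (b : A), Measurable fun g : K => (⟪x, U (g : G) (ι b)⟫ : ℂ) := by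
    intro x b
    obtain ⟨u, hu, hulim⟩ := mem_closure_iff_seq_limit.1 (hdense x)
    choose a ha using hu
    apply measurable_of_tendsto_metrizable (f := fun n (g : K) => (⟪u n, U (g : G) (ι b)⟫ : ℂ))
    · intro n
      rw [show u n = ι (a n) from (ha n).symm]
      exact hmeas1 (a n) b
    · rw [tendsto_pi_nhds]
      intro g
      exact hulim.inner tendsto_const_nhds
  have hUmeas : ∀ x y : H, Measurable fun g : K => (⟪x, U (g : G) y⟫ : ℂ) := by
    intro x y
    obtain ⟨u, hu, hulim⟩ := mem_closure_iff_seq_limit.1 (hdense y)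
    choose b hb using hu
    apply measurable_of_tendsto_metrizable (f := fun n (g : K) => (⟪x, U (g : G) (u n)⟫ : ℂ))
    · intro n
      rw [show u n = ι (b n) from (hb n).symm]
      exact hmeas2 x (b n)
    · rw [tendsto_pi_nhds]
      intro g
      exact tendsto_const_nhds.inner (((U (g : G)).continuous.tendsto y).comp hulim)
  -- identification of the integrands
  have hint_eq : ∀ (a b : A) (α : ι'), ∫ g in Λ α, ω (a * τ g b) ∂μ
      = ∫ g in Λ α, (⟪ι (star a), U g (ι b)⟫ : ℂ) ∂μ := by
    intro a b α
    apply setIntegral_congr_fun (hΛmeas α)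
    intro g hg
    show ω (a * τ g b) = ⟪ι (star a), U g (ι b)⟫
    rw [hUι g (hΛK α hg) b, hinner, star_star]
  have hωa : ∀ a : A, (⟪ι (star a), Ω⟫ : ℂ) = ω a := by
    intro a
    rw [hΩ, hinner, star_star, mul_one]
  have hωb : ∀ b : A, (⟪Ω, ι b⟫ : ℂ) = ω b := by
    intro b
    rw [hΩ, hinner, star_one, one_mul]
  have hMET : ∀ x y : H,
      Tendsto (fun α => (μ (Λ α)).toReal⁻¹ • ∫ g in Λ α, (⟪x, U g y⟫ : ℂ) ∂μ)
        atTop (nhds ⟪x, P y⟫) := fun x y =>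
    weak_MET μ K hKmeas hKmul U hUcontr hUmul hUmeas P hPfix hPorth Λ hΛK hΛmeas hΛfin
      hΛpos hFolner x y
  constructor
  · intro hyp
    have hPι : ∀ b : A, P (ι b) = (⟪Ω, ι b⟫ : ℂ) • Ω := by
      intro b
      have key : ∀ a : A, (⟪ι a, P (ι b)⟫ : ℂ) = ⟪ι a, (⟪Ω, ι b⟫ : ℂ) • Ω⟫ := by
        intro a
        have h1 : Tendsto (fun α => (μ (Λ α)).toReal⁻¹ • ∫ g in Λ α, (⟪ι a, U g (ι b)⟫ : ℂ) ∂μ)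
            atTop (nhds (ω (star a) * ω b)) := by
          refine (hyp (star a) b).congr (fun α => ?_)
          rw [hint_eq (star a) b, star_star]
        have h3 : (⟪ι a, P (ι b)⟫ : ℂ) = ω (star a) * ω b :=
          tendsto_nhds_unique (hMET (ι a) (ι b)) h1
        have h4 : (⟪ι a, Ω⟫ : ℂ) = ω (star a) := by
          have := hωa (star a)
          rwa [star_star] at this
        rw [h3, inner_smul_right, hωb, h4, mul_comm]
      have heq := DenseRange.equalizer hdense
        (g := fun z : H => (⟪z, P (ι b)⟫ : ℂ))
        (h := fun z : H => (⟪z, (⟪Ω, ι b⟫ : ℂ) • Ω⟫ : ℂ))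
        (Continuous.inner continuous_id continuous_const)
        (Continuous.inner continuous_id continuous_const)
        (funext fun a => key a)
      exact ext_inner_left ℂ (fun v => congrFun heq v)
    have heq2 := DenseRange.equalizer hdense
      (g := ⇑P) (h := fun z : H => (⟪Ω, z⟫ : ℂ) • Ω)
      P.continuous
      ((Continuous.inner continuous_const continuous_id).smul continuous_const)
      (funext fun b => by
        simp only [Function.comp_apply]
        exact hPι b)
    exact fun x => congrFun heq2 x
  · intro hP a b
    have h2 := hMET (ι (star a)) (ι b)
    rw [hP (ι b)] at h2
    have h3 : (⟪ι (star a), (⟪Ω, ι b⟫ : ℂ) • Ω⟫ : ℂ) = ω a * ω b := by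
      rw [inner_smul_right, hωb, hωa, mul_comm]
    rw [h3] at h2
    refine h2.congr (fun α => ?_)
    exact congrArg (fun z => (μ (Λ α)).toReal⁻¹ • z) (hint_eq a b α).symm
end
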